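/- arXiv:math/0608229 — 5 statements merged into one kernel-verified Lean document; each statement's English description precedes it below -/
import Mathlib

section
/- Let ξ be a Γ-equivalence class of reduced cycles of length m, with effective length ℓ(ξ) and stabilizer cardinality S(ξ). Then Σ_{e∈𝓕₁} (1/|Γ_e|) · |{D ∈ C_m : the cycle determined by D is Γ-equivalent to the cycles in ξ, and the first edge of D is e}| = ℓ(ξ)/S(ξ). -/
noncomputable section

/-- `c : ℕ → E` is (the edge sequence of) a closed path of length `m` in the graph
with origin and terminus maps `o, t`: it is `m`-periodic and consecutive edges match up
(closedness is built in by periodicity). -/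
def IsClosedPath {V E : Type*} (o t : E → V) (m : ℕ) (c : ℕ → E) : Prop :=
  (∀ i, t (c i) = o (c (i + 1))) ∧ (∀ i, c (i + m) = c i)

/-- Reduced (proper and tail-less) closed path: cyclically, no edge is followed by its
reverse.  -/
def IsReducedPath {E : Type*} (bar : E → E) (c : ℕ → E) : Prop :=
  ∀ i, c (i + 1) ≠ bar (c i)

/-- The effective length of a closed path: the length of the underlying prime cycle,
i.e. the least positive period. -/
def effLen {E : Type*} (c : ℕ → E) : ℕ :=
  sInf {p : ℕ | 0 < p ∧ ∀ i, c (i + p) = c i}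

/-- The stabilizer in `Γ` of the cycle determined by the closed path `c` : those `γ`
mapping `c` to a cyclic shift of itself. -/
def cycStab (Γ : Type*) {E : Type*} [Group Γ] [MulAction Γ E] (c : ℕ → E) : Set Γ :=
  {γ : Γ | ∃ k : ℕ, ∀ i, γ • c i = c (i + k)}

/-- The set of group elements carrying `x` to `y` is equivalent to the stabilizer of `y`,
given one such element. -/
private def transporterEquiv {Γ E : Type*} [Group Γ] [MulAction Γ E]
    (x y : E) (γ₀ : Γ) (h : γ₀ • x = y) :
    {γ : Γ // γ • x = y} ≃ MulAction.stabilizer Γ y where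
  toFun p := ⟨p.1 * γ₀⁻¹, by
    have hx : γ₀⁻¹ • y = x := by rw [← h, inv_smul_smul]
    rw [MulAction.mem_stabilizer_iff, mul_smul, hx, p.2]⟩
  invFun σ := ⟨σ.1 * γ₀, by rw [mul_smul, h]; exact σ.2⟩
  left_inv p := by ext; simp
  right_inv σ := by ext; simp

/-- Lemma 2.5 (counting lemma): for a `Γ`-class `ξ` of reduced cycles of length `m`,
represented by the reduced closed path `C`,
`Σ_{e∈𝓕₁} (1/|Γ_e|)·|{D ∈ C_m : [D] = ξ, e₀(D) = e}| = ℓ(ξ)/S(ξ)`. -/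
theorem counting_lemma
    {V E Γ : Type*} [Countable V] [Countable E] [Group Γ] [Countable Γ]
    [MulAction Γ V] [MulAction Γ E]
    -- the graph in the sense of Serre, connected, with degrees bounded by d
    (o t : E → V) (bar : E → E)
    (hbar_invol : ∀ e, bar (bar e) = e)
    (hbar_ne : ∀ e, bar e ≠ e)
    (ho_bar : ∀ e, o (bar e) = t e)
    (hconn : ∀ u v : V, Relation.ReflTransGen (fun a b => ∃ e, o e = a ∧ t e = b) u v)
    (d : ℕ) (hfib : ∀ v, {e | o e = v}.Finite)
    (hdeg : ∀ v, Nat.card {e // o e = v} ≤ d)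
    -- Γ acts by automorphisms of the graph
    (ho_smul : ∀ (γ : Γ) (e : E), o (γ • e) = γ • o e)
    (ht_smul : ∀ (γ : Γ) (e : E), t (γ • e) = γ • t e)
    (hbar_smul : ∀ (γ : Γ) (e : E), bar (γ • e) = γ • bar e)
    -- without inversions
    (hnoinv : ∀ (γ : Γ) (e : E), γ • e ≠ bar e)
    -- discretely (finite vertex stabilizers)
    (hstab : ∀ v : V, Finite (MulAction.stabilizer Γ v))
    -- 𝓕₁ contains exactly one representative of each Γ-orbit of edges
    (F1 : Set E) (hF1 : ∀ e : E, ∃! f, f ∈ F1 ∧ ∃ γ : Γ, γ • e = f)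
    -- bounded covolume
    (hcovol : Summable fun e : F1 => (1 : ℝ) / Nat.card (MulAction.stabilizer Γ (e : E)))
    -- ξ is represented by the reduced closed path C of length m ≥ 1
    (m : ℕ) (hm : 0 < m) (C : ℕ → E)
    (hC : IsClosedPath o t m C) (hCred : IsReducedPath bar C) :
    Summable (fun e : F1 => (1 : ℝ) / Nat.card (MulAction.stabilizer Γ (e : E)) *
      Nat.card {D : ℕ → E // IsClosedPath o t m D ∧ IsReducedPath bar D ∧
        (∃ (γ : Γ) (k : ℕ), ∀ i, D i = γ • C (i + k)) ∧ D 0 = e}) ∧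
    ∑' e : F1, (1 : ℝ) / Nat.card (MulAction.stabilizer Γ (e : E)) *
      Nat.card {D : ℕ → E // IsClosedPath o t m D ∧ IsReducedPath bar D ∧
        (∃ (γ : Γ) (k : ℕ), ∀ i, D i = γ • C (i + k)) ∧ D 0 = e} =
      (effLen C : ℝ) / Nat.card (cycStab Γ C) := by
  classical
  have hC1 : ∀ i, t (C i) = o (C (i + 1)) := hC.1
  have hC2 : ∀ i, C (i + m) = C i := hC.2
  set ℓ := effLen C with hℓdef
  set S : ℕ := Nat.card (cycStab Γ C) with hSdef
  have hmem : m ∈ {p : ℕ | 0 < p ∧ ∀ i, C (i + p) = C i} := ⟨hm, hC2⟩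
  have hℓmem : 0 < ℓ ∧ ∀ i, C (i + ℓ) = C i :=
    Nat.sInf_mem (⟨m, hmem⟩ : Set.Nonempty _)
  obtain ⟨hℓpos, hℓper⟩ := hℓmem
  have hℓle : ℓ ≤ m := Nat.sInf_le hmem
  have hmulper : ∀ (n : ℕ) (i : ℕ), C (i + ℓ * n) = C i := by
    intro n
    induction n with
    | zero => intro i; simp
    | succ n ih =>
      intro i
      have h : i + ℓ * (n + 1) = (i + ℓ * n) + ℓ := by ring
      rw [h, hℓper, ih]
  have hmod : ∀ i k, C (i + k) = C (i + k % ℓ) := by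
    intro i k
    have h : i + k = (i + k % ℓ) + ℓ * (k / ℓ) := by
      conv_lhs => rw [← Nat.div_add_mod k ℓ]
      ring
    rw [h, hmulper]
  have hshift_inj : ∀ a b : ℕ, a < ℓ → b < ℓ → (∀ i, C (i + a) = C (i + b)) → a = b := by
    have key : ∀ a b : ℕ, a ≤ b → a < ℓ → b < ℓ → (∀ i, C (i + a) = C (i + b)) → a = b := by
      intro a b hab ha hb h
      by_contra hne
      have hj : 0 < b - a := by omega
      have hper' : ∀ n, C (n + (b - a)) = C n := by
        intro n
        have h1 := h (n + (m - a))
        have e1 : n + (m - a) + a = n + m := by omega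
        have e2 : n + (m - a) + b = (n + (b - a)) + m := by omega
        rw [e1, e2, hC2, hC2] at h1
        exact h1.symm
      have : ℓ ≤ b - a := Nat.sInf_le ⟨hj, hper'⟩
      omega
    intro a b ha hb h
    rcases le_total a b with hab | hab
    · exact key a b hab ha hb h
    · exact (key b a hab hb ha (fun i => (h i).symm)).symm
  -- finiteness of edge stabilizers and transporters
  have finStab : ∀ x : E, Finite (MulAction.stabilizer Γ x) := by
    intro x
    have hfin : Finite (MulAction.stabilizer Γ (o x)) := hstab (o x)
    refine Finite.of_injective (fun σ : MulAction.stabilizer Γ x =>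
      (⟨σ.1, ?_⟩ : MulAction.stabilizer Γ (o x))) ?_
    · have h2 : σ.1 • x = x := σ.2
      rw [MulAction.mem_stabilizer_iff, ← ho_smul, h2]
    · intro a b hab
      have h3 : (a : Γ) = (b : Γ) :=
        congrArg (fun z : MulAction.stabilizer Γ (o x) => (z : Γ)) hab
      exact Subtype.ext h3
  have finTrans : ∀ x y : E, Finite {γ : Γ // γ • x = y} := by
    intro x y
    by_cases hne : ∃ γ₀ : Γ, γ₀ • x = y
    · obtain ⟨γ₀, hγ₀⟩ := hne
      have := finStab y
      exact Finite.of_equiv _ (transporterEquiv x y γ₀ hγ₀).symm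
    · have : IsEmpty {γ : Γ // γ • x = y} := ⟨fun p => hne ⟨p.1, p.2⟩⟩
      infer_instance
  have cardTrans : ∀ (x y : E) (γ₀ : Γ), γ₀ • x = y →
      Nat.card {γ : Γ // γ • x = y} = Nat.card (MulAction.stabilizer Γ y) :=
    fun x y γ₀ h => Nat.card_congr (transporterEquiv x y γ₀ h)
  have stabPos : ∀ x : E, 0 < Nat.card (MulAction.stabilizer Γ x) := by
    intro x
    have := finStab x
    exact Nat.card_pos
  -- finiteness and positivity of the cycle stabilizer
  have fincyc : Finite (cycStab Γ C) := by
    have hft : ∀ k : Fin ℓ, Finite {γ : Γ // γ • C 0 = C (k : ℕ)} := fun k => finTrans _ _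
    let g : cycStab Γ C → (k : Fin ℓ) × {γ : Γ // γ • C 0 = C (k : ℕ)} := fun δ =>
      ⟨⟨(Classical.choose δ.2) % ℓ, Nat.mod_lt _ hℓpos⟩,
        ⟨δ.1, by
          have hs := Classical.choose_spec δ.2
          rw [hs 0, hmod 0, Nat.zero_add]⟩⟩
    have hginj : Function.Injective g := by
      intro a b hab
      apply Subtype.ext
      exact congrArg (fun z : (k : Fin ℓ) × {γ : Γ // γ • C 0 = C (k : ℕ)} => z.2.1) hab
    exact Finite.of_injective g hginj
  have Spos : 0 < S := by
    have h1 : (1 : Γ) ∈ cycStab Γ C := ⟨0, fun i => by simp⟩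
    have : Nonempty (cycStab Γ C) := ⟨⟨1, h1⟩⟩
    have := fincyc
    exact Nat.card_pos
  -- the count of shifts hitting a given edge
  set N : E → ℕ := fun x =>
    ((Finset.range ℓ).filter fun k => ∃ γ : Γ, γ • C k = x).card with hN
  -- the key identity for every edge
  have hterm : ∀ x : E,
      (1 : ℝ) / Nat.card (MulAction.stabilizer Γ x) *
        Nat.card {D : ℕ → E // IsClosedPath o t m D ∧ IsReducedPath bar D ∧
          (∃ (γ : Γ) (k : ℕ), ∀ i, D i = γ • C (i + k)) ∧ D 0 = x} =
      (N x : ℝ) / S := by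
    intro x
    set P := {p : Fin ℓ × Γ // p.2 • C (p.1 : ℕ) = x} with hP
    set A := {D : ℕ → E // IsClosedPath o t m D ∧ IsReducedPath bar D ∧
      (∃ (γ : Γ) (k : ℕ), ∀ i, D i = γ • C (i + k)) ∧ D 0 = x} with hA
    have mkA : ∀ (γ : Γ) (k : ℕ) (D : ℕ → E), (∀ i, D i = γ • C (i + k)) →
        IsClosedPath o t m D ∧ IsReducedPath bar D := by
      intro γ k D hD
      constructor
      · constructor
        · intro i
          rw [hD i, hD (i + 1), show i + 1 + k = (i + k) + 1 from by ring,
            ht_smul, ho_smul, hC1]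
        · intro i
          rw [hD (i + m), hD i, show i + m + k = (i + k) + m from by ring, hC2]
      · intro i h
        rw [hD (i + 1), hD i, hbar_smul] at h
        have h2 := MulAction.injective γ h
        exact hCred (i + k)
          (by rw [show i + k + 1 = i + 1 + k from by ring]; exact h2)
    let Φ : P → A := fun p =>
      ⟨fun i => p.1.2 • C (i + (p.1.1 : ℕ)),
        (mkA _ _ _ fun i => rfl).1, (mkA _ _ _ fun i => rfl).2,
        ⟨p.1.2, p.1.1, fun i => rfl⟩,
        by show p.1.2 • C (0 + (p.1.1 : ℕ)) = x; rw [Nat.zero_add]; exact p.2⟩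
    have hsurj : Function.Surjective Φ := by
      rintro ⟨D, hD1, hD2, ⟨γ, k, hD⟩, hD0⟩
      refine ⟨⟨(⟨k % ℓ, Nat.mod_lt _ hℓpos⟩, γ), ?_⟩, ?_⟩
      · show γ • C (k % ℓ) = x
        calc γ • C (k % ℓ) = γ • C (0 + k % ℓ) := by rw [Nat.zero_add]
          _ = γ • C (0 + k) := by rw [← hmod]
          _ = D 0 := (hD 0).symm
          _ = x := hD0
      · apply Subtype.ext
        funext i
        show γ • C (i + k % ℓ) = D i
        rw [← hmod i k]
        exact (hD i).symm
    -- fibers of Φ all have cardinality S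
    have hfibcard : ∀ D : A, Nat.card {p : P // Φ p = D} = S := by
      intro D
      obtain ⟨⟨⟨k₀f, γ₀⟩, hp₀mem⟩, hp₀⟩ := hsurj D
      set k₀ := (k₀f : ℕ) with hk₀def
      have hk₀lt : k₀ < ℓ := k₀f.2
      have hbase : ∀ i, γ₀ • C (i + k₀) = D.1 i := fun i =>
        congrFun (congrArg Subtype.val hp₀) i
      have hq : ∀ q : {p : P // Φ p = D}, ∀ i,
          q.1.1.2 • C (i + (q.1.1.1 : ℕ)) = D.1 i :=
        fun q i => congrFun (congrArg Subtype.val q.2) i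
      have hmemf : ∀ q : {p : P // Φ p = D}, γ₀⁻¹ * q.1.1.2 ∈ cycStab Γ C := by
        intro q
        have hk'lt : (q.1.1.1 : ℕ) < ℓ := q.1.1.1.2
        refine ⟨m + k₀ - (q.1.1.1 : ℕ), fun j => ?_⟩
        have h1 : q.1.1.2 • C ((j + (m - (q.1.1.1 : ℕ))) + (q.1.1.1 : ℕ)) =
            D.1 (j + (m - (q.1.1.1 : ℕ))) := hq q _
        have e1 : (j + (m - (q.1.1.1 : ℕ))) + (q.1.1.1 : ℕ) = j + m := by omega
        rw [e1, hC2] at h1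
        have h2 : D.1 (j + (m - (q.1.1.1 : ℕ))) =
            γ₀ • C (j + (m + k₀ - (q.1.1.1 : ℕ))) := by
          rw [← hbase (j + (m - (q.1.1.1 : ℕ))),
            show (j + (m - (q.1.1.1 : ℕ))) + k₀ = j + (m + k₀ - (q.1.1.1 : ℕ)) from by omega]
        rw [mul_smul, h1, h2, inv_smul_smul]
      have finj : Function.Injective (fun q : {p : P // Φ p = D} =>
          (⟨γ₀⁻¹ * q.1.1.2, hmemf q⟩ : cycStab Γ C)) := by
        intro q₁ q₂ h
        have hγ : q₁.1.1.2 = q₂.1.1.2 :=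
          mul_left_cancel (congrArg Subtype.val h)
        have hkk : (q₁.1.1.1 : ℕ) = (q₂.1.1.1 : ℕ) := by
          apply hshift_inj _ _ q₁.1.1.1.2 q₂.1.1.1.2
          intro i
          have h1 := hq q₁ i
          have h2 := hq q₂ i
          rw [hγ] at h1
          exact MulAction.injective q₂.1.1.2 (h1.trans h2.symm)
        apply Subtype.ext
        apply Subtype.ext
        exact Prod.ext (Fin.ext hkk) hγ
      have fsurj : Function.Surjective (fun q : {p : P // Φ p = D} =>
          (⟨γ₀⁻¹ * q.1.1.2, hmemf q⟩ : cycStab Γ C)) := by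
        rintro ⟨δ, hδ⟩
        obtain ⟨s₀, hs₀⟩ := hδ
        have hslt : s₀ % ℓ < ℓ := Nat.mod_lt _ hℓpos
        have hs : ∀ i, δ • C i = C (i + s₀ % ℓ) := by
          intro i
          rw [hs₀ i, hmod i s₀]
        have hk'lt : (k₀ + (ℓ - s₀ % ℓ)) % ℓ < ℓ := Nat.mod_lt _ hℓpos
        have hkey : ∀ i, (γ₀ * δ) • C (i + (k₀ + (ℓ - s₀ % ℓ)) % ℓ) = D.1 i := by
          intro i
          rw [mul_smul, hs (i + (k₀ + (ℓ - s₀ % ℓ)) % ℓ)]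
          have he : C (i + (k₀ + (ℓ - s₀ % ℓ)) % ℓ + s₀ % ℓ) = C (i + k₀) := by
            rw [show i + (k₀ + (ℓ - s₀ % ℓ)) % ℓ + s₀ % ℓ =
              i + ((k₀ + (ℓ - s₀ % ℓ)) % ℓ + s₀ % ℓ) from by ring,
              hmod i ((k₀ + (ℓ - s₀ % ℓ)) % ℓ + s₀ % ℓ)]
            have h2 : ((k₀ + (ℓ - s₀ % ℓ)) % ℓ + s₀ % ℓ) % ℓ = k₀ % ℓ := by
              rw [Nat.mod_add_mod,
                show k₀ + (ℓ - s₀ % ℓ) + s₀ % ℓ = k₀ + ℓ from by omega]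
              exact Nat.add_mod_right k₀ ℓ
            rw [h2, Nat.mod_eq_of_lt hk₀lt]
          rw [he, hbase i]
        refine ⟨⟨⟨(⟨(k₀ + (ℓ - s₀ % ℓ)) % ℓ, hk'lt⟩, γ₀ * δ), ?_⟩, ?_⟩, ?_⟩
        · show (γ₀ * δ) • C ((k₀ + (ℓ - s₀ % ℓ)) % ℓ) = x
          have h0 := hkey 0
          rw [Nat.zero_add] at h0
          rw [h0]
          exact D.2.2.2.2
        · apply Subtype.ext
          funext i
          exact hkey i
        · apply Subtype.ext
          show γ₀⁻¹ * (γ₀ * δ) = δ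
          group
      exact Nat.card_eq_of_bijective _ ⟨finj, fsurj⟩
    -- P as a sigma over Fin ℓ
    have eqv : P ≃ (k : Fin ℓ) × {γ : Γ // γ • C (k : ℕ) = x} :=
      { toFun := fun p => ⟨p.1.1, p.1.2, p.2⟩
        invFun := fun q => ⟨(q.1, q.2.1), q.2.2⟩
        left_inv := fun p => rfl
        right_inv := fun q => rfl }
    have finP : Finite P := by
      have : ∀ k : Fin ℓ, Finite {γ : Γ // γ • C (k : ℕ) = x} := fun k => finTrans _ _
      exact Finite.of_equiv _ eqv.symm
    have finA : Finite A := Finite.of_surjective Φ hsurj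
    have cardP1 : Nat.card P = S * Nat.card A := by
      letI : Fintype A := Fintype.ofFinite A
      letI : ∀ D : A, Fintype {p : P // Φ p = D} := fun D => by
        have : Finite {p : P // Φ p = D} := Subtype.finite
        exact Fintype.ofFinite _
      calc Nat.card P = Nat.card ((D : A) × {p : P // Φ p = D}) :=
            Nat.card_congr (Equiv.sigmaFiberEquiv Φ).symm
        _ = ∑ D : A, Fintype.card {p : P // Φ p = D} := by
            rw [Nat.card_eq_fintype_card, Fintype.card_sigma]
        _ = ∑ _D : A, S := by
            refine Finset.sum_congr rfl fun D _ => ?_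
            rw [← Nat.card_eq_fintype_card]
            exact hfibcard D
        _ = Fintype.card A * S := by rw [Finset.sum_const, Finset.card_univ, smul_eq_mul]
        _ = S * Nat.card A := by rw [Nat.card_eq_fintype_card, Nat.mul_comm]
    have cardP2 : Nat.card P = N x * Nat.card (MulAction.stabilizer Γ x) := by
      letI : ∀ k : Fin ℓ, Fintype {γ : Γ // γ • C (k : ℕ) = x} := fun k =>
        @Fintype.ofFinite _ (finTrans _ _)
      have h1 : Nat.card P = ∑ k : Fin ℓ, Fintype.card {γ : Γ // γ • C (k : ℕ) = x} := by
        rw [Nat.card_congr eqv, Nat.card_eq_fintype_card, Fintype.card_sigma]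
      have h2 : ∀ k : Fin ℓ, Fintype.card {γ : Γ // γ • C (k : ℕ) = x} =
          if ∃ γ : Γ, γ • C (k : ℕ) = x then Nat.card (MulAction.stabilizer Γ x) else 0 := by
        intro k
        split_ifs with hex
        · obtain ⟨γ₁, hγ₁⟩ := hex
          rw [← Nat.card_eq_fintype_card]
          exact cardTrans _ _ γ₁ hγ₁
        · rw [Fintype.card_eq_zero_iff]
          exact ⟨fun p => hex ⟨p.1, p.2⟩⟩
      calc Nat.card P
          = ∑ k : Fin ℓ, Fintype.card {γ : Γ // γ • C (k : ℕ) = x} := h1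
        _ = ∑ k : Fin ℓ, (if ∃ γ : Γ, γ • C (k : ℕ) = x
              then Nat.card (MulAction.stabilizer Γ x) else 0) :=
            Finset.sum_congr rfl fun k _ => h2 k
        _ = ∑ k ∈ Finset.range ℓ, (if ∃ γ : Γ, γ • C k = x
              then Nat.card (MulAction.stabilizer Γ x) else 0) :=
            Fin.sum_univ_eq_sum_range
              (fun k => if ∃ γ : Γ, γ • C k = x
                then Nat.card (MulAction.stabilizer Γ x) else 0) ℓ
        _ = ∑ _k ∈ (Finset.range ℓ).filter (fun k => ∃ γ : Γ, γ • C k = x),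
              Nat.card (MulAction.stabilizer Γ x) := (Finset.sum_filter _ _).symm
        _ = N x * Nat.card (MulAction.stabilizer Γ x) := by
            rw [Finset.sum_const, smul_eq_mul, hN]
    -- conclude the real identity
    have hcard_eq : S * Nat.card A = N x * Nat.card (MulAction.stabilizer Γ x) :=
      cardP1.symm.trans cardP2
    have hg : (0 : ℝ) < (Nat.card (MulAction.stabilizer Γ x) : ℝ) := by
      exact_mod_cast stabPos x
    have hSr : (0 : ℝ) < (S : ℝ) := by exact_mod_cast Spos
    have hcast : (S : ℝ) * (Nat.card A : ℝ) =
        (N x : ℝ) * (Nat.card (MulAction.stabilizer Γ x) : ℝ) := by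
      exact_mod_cast congrArg (Nat.cast : ℕ → ℝ) hcard_eq
    show (1 : ℝ) / (Nat.card (MulAction.stabilizer Γ x) : ℝ) * (Nat.card A : ℝ) =
      (N x : ℝ) / (S : ℝ)
    rw [one_div, inv_mul_eq_div, div_eq_div_iff hg.ne' hSr.ne']
    linear_combination hcast
  -- the orbit representatives of the edges of C
  have hrep_spec : ∀ k : ℕ,
      ((hF1 (C k)).choose ∈ F1 ∧ ∃ γ : Γ, γ • C k = (hF1 (C k)).choose) :=
    fun k => (hF1 (C k)).choose_spec.1
  set rep : ℕ → E := fun k => (hF1 (C k)).choose with hrepdef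
  have hrep_mem : ∀ k, rep k ∈ F1 := fun k => (hrep_spec k).1
  have hrep_uniq : ∀ (k : ℕ) (y : E), y ∈ F1 → (∃ γ : Γ, γ • C k = y) → y = rep k :=
    fun k y hy hgy => (hF1 (C k)).choose_spec.2 y ⟨hy, hgy⟩
  have horbit_iff : ∀ (k : ℕ) (e : F1), (∃ γ : Γ, γ • C k = (e : E)) ↔ rep k = (e : E) := by
    intro k e
    constructor
    · intro h; exact (hrep_uniq k e e.2 h).symm
    · intro h; rw [← h]; exact (hrep_spec k).2
  set s : Finset F1 := (Finset.range ℓ).image (fun k => (⟨rep k, hrep_mem k⟩ : F1))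
    with hsfin
  have hNzero : ∀ e : F1, e ∉ s → N (e : E) = 0 := by
    intro e he
    rw [hN]
    simp only
    rw [Finset.card_eq_zero, Finset.filter_eq_empty_iff]
    intro k hk hex
    exact he (Finset.mem_image.mpr ⟨k, hk,
      Subtype.ext ((horbit_iff k e).mp hex)⟩)
  have hNcount : ∀ e : F1,
      N (e : E) = ∑ k ∈ Finset.range ℓ, if rep k = (e : E) then 1 else 0 := by
    intro e
    rw [hN]
    simp only
    rw [Finset.card_filter]
    exact Finset.sum_congr rfl fun k _ => if_congr (horbit_iff k e) rfl rfl
  have hcount : ∑ e ∈ s, N (e : E) = ℓ := by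
    calc ∑ e ∈ s, N (e : E)
        = ∑ e ∈ s, ∑ k ∈ Finset.range ℓ, (if rep k = (e : E) then 1 else 0) :=
          Finset.sum_congr rfl fun e _ => hNcount e
      _ = ∑ k ∈ Finset.range ℓ, ∑ e ∈ s, (if rep k = (e : E) then 1 else 0) :=
          Finset.sum_comm
      _ = ∑ _k ∈ Finset.range ℓ, 1 := by
          refine Finset.sum_congr rfl fun k hk => ?_
          have hmemk : (⟨rep k, hrep_mem k⟩ : F1) ∈ s :=
            Finset.mem_image.mpr ⟨k, hk, rfl⟩
          have hiff : ∀ e : F1, (rep k = (e : E)) ↔ (e = ⟨rep k, hrep_mem k⟩) := by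
            intro e
            constructor
            · intro h; exact Subtype.ext h.symm
            · intro h; rw [h]
          rw [Finset.sum_congr rfl fun e _ => if_congr (hiff e) rfl rfl,
            Finset.sum_ite_eq' s (⟨rep k, hrep_mem k⟩ : F1) (fun _ => 1),
            if_pos hmemk]
      _ = ℓ := by simp
  have hzero : ∀ e : F1, e ∉ s →
      (1 : ℝ) / Nat.card (MulAction.stabilizer Γ (e : E)) *
        Nat.card {D : ℕ → E // IsClosedPath o t m D ∧ IsReducedPath bar D ∧
          (∃ (γ : Γ) (k : ℕ), ∀ i, D i = γ • C (i + k)) ∧ D 0 = (e : E)} = 0 := by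
    intro e he
    rw [hterm (e : E), hNzero e he]
    simp
  constructor
  · exact summable_of_ne_finset_zero (s := s) hzero
  · rw [tsum_eq_sum (s := s) hzero]
    calc ∑ e ∈ s, ((1 : ℝ) / Nat.card (MulAction.stabilizer Γ (e : E)) *
          Nat.card {D : ℕ → E // IsClosedPath o t m D ∧ IsReducedPath bar D ∧
            (∃ (γ : Γ) (k : ℕ), ∀ i, D i = γ • C (i + k)) ∧ D 0 = (e : E)})
        = ∑ e ∈ s, ((N (e : E) : ℝ) / S) :=
          Finset.sum_congr rfl fun e _ => hterm (e : E)
      _ = (ℓ : ℝ) / S := by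
          rw [← Finset.sum_div, ← Nat.cast_sum, hcount]
      _ = (effLen C : ℝ) / Nat.card (cycStab Γ C) := rfl
end
end

section
/- For every m≥1, the sum N_m^Γ := Σ_ξ ℓ(ξ)/S(ξ), taken over all Γ-equivalence classes ξ of reduced cycles of length m, converges, and Tr_Γ(T^m) = N_m^Γ. -/
noncomputable section

/-!
By induction on `k`, `(T^k δ_a)(b)` counts the walks `a = c 0, …, c k = b` in which `c i` is
followed by an edge starting at `t (c i)` other than `bar (c i)`. Hence `(T^m δ_e)(e)` is the number
`N(e) ≤ d^m` of closed reduced paths `c` of length `m` with `c 0 = e`, and with the weight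
`w = 1_{𝓕₁} / |Γ_e|` the trace is `Σ_e w(e) N(e) = Σ_c w(c 0)`. Split this sum along the classes
`ξ`: each orbit of edges carries total weight `Σ_γ w(γ • e) = 1`, and `(k, γ) ↦ γ • c₀(· + k)` maps
`ZMod ℓ(ξ) × Γ` onto `ξ` with all fibres in bijection with the stabilizer of the cycle, so `ξ`
contributes `ℓ(ξ)/S(ξ)`. All sums are taken in `ℝ≥0∞`, where they may be rearranged freely;
`N ≤ d^m` and the bounded covolume make them finite.
-/

open Function MulAction
open scoped ENNReal

section Periods

variable {α : Type*}

def seqShift (c : ℕ → α) : ℕ → α := fun i => c (i + 1)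

theorem seqShift_iterate (k : ℕ) (c : ℕ → α) : seqShift^[k] c = fun i => c (i + k) := by
  induction k generalizing c with
  | zero => rfl
  | succ k ih => rw [iterate_succ_apply, ih]; funext i; simp only [seqShift, add_assoc]

theorem isPeriodicPt_seqShift_iff {c : ℕ → α} {p : ℕ} :
    IsPeriodicPt seqShift p c ↔ Periodic c p := by
  rw [IsPeriodicPt, IsFixedPt, seqShift_iterate, funext_iff]; rfl

theorem effLen_eq_minimalPeriod (c : ℕ → α) : effLen c = minimalPeriod seqShift c := by
  simp only [minimalPeriod_eq_sInf_n_pos_IsPeriodicPt, isPeriodicPt_seqShift_iff]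
  rfl

variable {c : ℕ → α} {m : ℕ}

theorem periodic_effLen (c : ℕ → α) : Periodic c (effLen c) := by
  rw [effLen_eq_minimalPeriod, ← isPeriodicPt_seqShift_iff]
  exact isPeriodicPt_minimalPeriod _ _

theorem effLen_pos (hm : 0 < m) (hc : Periodic c m) : 0 < effLen c := by
  rw [effLen_eq_minimalPeriod]
  exact (isPeriodicPt_seqShift_iff.2 hc).minimalPeriod_pos hm

theorem shift_eq_shift_iff (hm : 0 < m) (hc : Periodic c m) {a b : ℕ} :
    (∀ i, c (i + a) = c (i + b)) ↔ a % effLen c = b % effLen c := by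
  have hpos := effLen_pos hm hc
  rw [effLen_eq_minimalPeriod] at hpos ⊢
  rw [← iterate_eq_iterate_iff_of_lt_minimalPeriod (Nat.mod_lt _ hpos) (Nat.mod_lt _ hpos),
    iterate_mod_minimalPeriod_eq, iterate_mod_minimalPeriod_eq, seqShift_iterate,
    seqShift_iterate, funext_iff]

end Periods

section Walks

variable {α : Type*} (r : α → α → Prop)

/-- Extended by `c i = b` for `i ≥ k`, so that a walk is determined by its first `k + 1` terms. -/
def RelWalk (k : ℕ) (a b : α) : Type _ :=
  {c : ℕ → α // c 0 = a ∧ (∀ i < k, r (c i) (c (i + 1))) ∧ ∀ i, c (i + k) = b}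

variable {r}

theorem RelWalk.apply_of_le {k : ℕ} {a b : α} (w : RelWalk r k a b) {i : ℕ} (hi : k ≤ i) :
    w.1 i = b := by
  simpa [Nat.sub_add_cancel hi] using w.2.2.2 (i - k)

instance RelWalk.subsingleton_zero (a b : α) : Subsingleton (RelWalk r 0 a b) :=
  ⟨fun w w' => Subtype.ext <| funext fun i => (w.apply_of_le (Nat.zero_le i)).trans
    (w'.apply_of_le (Nat.zero_le i)).symm⟩

theorem card_relWalk_zero [DecidableEq α] (a b : α) :
    Nat.card (RelWalk r 0 a b) = if a = b then 1 else 0 := by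
  split_ifs with h
  · subst h
    exact Nat.card_of_subsingleton ⟨fun _ => a, rfl, nofun, fun _ => rfl⟩
  · have : IsEmpty (RelWalk r 0 a b) := ⟨fun w => h (w.2.1.symm.trans (w.apply_of_le le_rfl))⟩
    exact Nat.card_of_isEmpty

def relWalkSuccEquiv (k : ℕ) (a b : α) :
    RelWalk r (k + 1) a b ≃ Σ p : {p // r p b}, RelWalk r k a p where
  toFun w := ⟨⟨w.1 k, by simpa [w.apply_of_le le_rfl] using w.2.2.1 k (Nat.lt_succ_self k)⟩,
    ⟨fun i => w.1 (min i k), by simpa using w.2.1,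
      fun i hi => by
        simpa [min_eq_left hi.le, min_eq_left (Nat.succ_le_of_lt hi)] using w.2.2.1 i (by omega),
      fun i => by simp⟩⟩
  invFun x := ⟨fun i => if i ≤ k then x.2.1 i else b, by simpa using x.2.2.1,
    fun i hi => by
      rcases Nat.lt_succ_iff_lt_or_eq.1 hi with hi | rfl
      · simpa [hi.le, Nat.succ_le_of_lt hi] using x.2.2.2.1 i hi
      · simpa [x.2.apply_of_le le_rfl] using x.1.2,
    fun i => if_neg (by omega)⟩
  left_inv w := by
    refine Subtype.ext (funext fun i => ?_)
    by_cases hi : i ≤ k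
    · simp [hi]
    · simp [hi, w.apply_of_le (by omega : k + 1 ≤ i)]
  right_inv := by
    rintro ⟨⟨p, hp⟩, w⟩
    refine Sigma.subtype_ext (Subtype.ext (by simpa using w.apply_of_le le_rfl))
      (funext fun i => ?_)
    by_cases hi : i ≤ k
    · simp [hi]
    · simp [show min i k = k by omega, w.apply_of_le le_rfl, w.apply_of_le (by omega : k ≤ i)]

theorem finite_relWalk (hr : ∀ b, Finite {p // r p b}) (k : ℕ) (a b : α) :
    Finite (RelWalk r k a b) := by
  induction k generalizing b with
  | zero => infer_instance
  | succ k ih => exact Finite.of_equiv _ (relWalkSuccEquiv k a b).symm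

theorem card_relWalk_succ (hr : ∀ b, Finite {p // r p b}) (k : ℕ) (a b : α)
    [Fintype {p // r p b}] :
    Nat.card (RelWalk r (k + 1) a b) = ∑ p : {p // r p b}, Nat.card (RelWalk r k a p) := by
  have := fun p : {p // r p b} => finite_relWalk hr k a p
  rw [Nat.card_congr (relWalkSuccEquiv k a b), Nat.card_sigma]

theorem card_relWalk_le {d : ℕ} (hr : ∀ b, Finite {p // r p b})
    (hd : ∀ b, Nat.card {p // r p b} ≤ d) (k : ℕ) (a b : α) :
    Nat.card (RelWalk r k a b) ≤ d ^ k := by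
  classical
  induction k generalizing b with
  | zero => rw [card_relWalk_zero]; split_ifs <;> simp
  | succ k ih =>
    have := Fintype.ofFinite {p // r p b}
    calc Nat.card (RelWalk r (k + 1) a b)
        = ∑ p : {p // r p b}, Nat.card (RelWalk r k a p) := card_relWalk_succ hr k a b
      _ ≤ ∑ _p : {p // r p b}, d ^ k := Finset.sum_le_sum fun p _ => ih p
      _ ≤ d * d ^ k := by
        rw [Finset.sum_const, Finset.card_univ, ← Nat.card_eq_fintype_card, smul_eq_mul]
        exact Nat.mul_le_mul_right _ (hd b)
      _ = d ^ (k + 1) := (pow_succ' d k).symm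

theorem RelWalk.apply_mod_self {m : ℕ} {a : α} (w : RelWalk r m a a) {n : ℕ} (hn : n ≤ m) :
    w.1 (n % m) = w.1 n := by
  rcases hn.lt_or_eq with hn | rfl
  · rw [Nat.mod_eq_of_lt hn]
  · rw [Nat.mod_self, w.2.1, w.apply_of_le le_rfl]

def periodicChainEquivRelWalk {m : ℕ} (hm : 0 < m) (a : α) :
    {c : {c : ℕ → α // Periodic c m ∧ ∀ i, r (c i) (c (i + 1))} // c.1 0 = a} ≃
      RelWalk r m a a where
  toFun c := ⟨fun i => c.1.1 (min i m), by simpa using c.2,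
    fun i hi => by simpa [min_eq_left hi.le, min_eq_left (Nat.succ_le_of_lt hi)] using c.1.2.2 i,
    fun i => by simpa [c.1.2.1.eq] using c.2⟩
  invFun w := ⟨⟨fun i => w.1 (i % m), fun i => by simp,
    fun i => by
      have hi := Nat.mod_lt i hm
      show r (w.1 (i % m)) (w.1 ((i + 1) % m))
      rw [← Nat.mod_add_mod, w.apply_mod_self (Nat.succ_le_of_lt hi)]
      exact w.2.2.1 _ hi⟩, by simpa using w.2.1⟩
  left_inv c := by
    refine Subtype.ext (Subtype.ext (funext fun i => ?_))
    simp [min_eq_left (Nat.mod_lt i hm).le, c.1.2.1.map_mod_nat]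
  right_inv w := by
    refine Subtype.ext (funext fun i => ?_)
    rcases le_total i m with hi | hi
    · simp [min_eq_left hi, w.apply_mod_self hi]
    · simp [min_eq_right hi, w.2.1, w.apply_of_le hi]

end Walks

theorem pow_apply_single_eq_card_relWalk {α : Type*} [DecidableEq α] {r : α → α → Prop}
    (hr : ∀ b, Finite {p // r p b}) (T : lp (fun _ : α => ℂ) 2 →L[ℂ] lp (fun _ : α => ℂ) 2)
    (hT : ∀ ω b, T ω b = ∑' p : {p // r p b}, ω p) (k : ℕ) (a b : α) :
    (T ^ k) (lp.single 2 a 1) b = Nat.card (RelWalk r k a b) := by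
  induction k generalizing b with
  | zero => simp [card_relWalk_zero, Pi.single_apply, eq_comm]
  | succ k ih =>
    have := Fintype.ofFinite {p // r p b}
    rw [pow_succ', mul_apply_eq_comp, hT, tsum_fintype, card_relWalk_succ hr, Nat.cast_sum]
    exact Finset.sum_congr rfl fun p _ => ih p

theorem ENNReal.tsum_const_of_finite {ι : Type*} [Finite ι] (c : ℝ≥0∞) :
    ∑' _ : ι, c = Nat.card ι * c := by
  rw [ENNReal.tsum_const, ENat.card_eq_coe_natCard, ENat.toENNReal_coe]

theorem ENNReal.summable_toReal_and_tsum_toReal_eq {ι κ : Type*} {f : ι → ℝ≥0∞} {g : κ → ℝ≥0∞}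
    (h : ∑' i, f i = ∑' j, g j) (hf : ∑' i, f i ≠ ∞) :
    Summable (fun i => (f i).toReal) ∧ Summable (fun j => (g j).toReal) ∧
      ∑' i, (f i).toReal = ∑' j, (g j).toReal := by
  have hg : ∑' j, g j ≠ ∞ := h ▸ hf
  refine ⟨ENNReal.summable_toReal hf, ENNReal.summable_toReal hg, ?_⟩
  rw [← ENNReal.tsum_toReal_eq (ENNReal.ne_top_of_tsum_ne_top hf),
    ← ENNReal.tsum_toReal_eq (ENNReal.ne_top_of_tsum_ne_top hg), h]

theorem ENNReal.tsum_mul_inv_natCast_ne_top {ι : Type*} {N n : ι → ℕ} {D : ℕ}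
    (hN : ∀ i, N i ≤ D) (hn : ∀ i, n i ≠ 0) (hsum : Summable fun i => (1 : ℝ) / n i) :
    ∑' i, (N i : ℝ≥0∞) * (n i : ℝ≥0∞)⁻¹ ≠ ∞ := by
  have hinv : ∑' i, (n i : ℝ≥0∞)⁻¹ ≠ ∞ := by
    convert ENNReal.ofReal_ne_top (r := ∑' i, (1 : ℝ) / n i) using 1
    rw [ENNReal.ofReal_tsum_of_nonneg (fun i => by positivity) hsum]
    refine tsum_congr fun i => ?_
    rw [one_div, ENNReal.ofReal_inv_of_pos (by simpa [Nat.pos_iff_ne_zero] using hn i),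
      ENNReal.ofReal_natCast]
  refine ne_top_of_le_ne_top (ENNReal.mul_ne_top (ENNReal.natCast_ne_top D) hinv) ?_
  rw [← ENNReal.tsum_mul_left]
  exact ENNReal.tsum_le_tsum fun i => mul_le_mul_left (by exact_mod_cast hN i) _

section Transporter

variable {Γ α β : Type*} [Group Γ] [MulAction Γ α] [MulAction Γ β]

def smulEqEquivStabilizer (g : Γ) (x : α) : {γ : Γ | γ • x = g • x} ≃ stabilizer Γ x where
  toFun γ := ⟨g⁻¹ * γ, by simp [mem_stabilizer_iff, mul_smul, γ.2.out]⟩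
  invFun δ := ⟨g * δ, by simp [mul_smul, mem_stabilizer_iff.1 δ.2]⟩
  left_inv γ := by simp
  right_inv δ := by simp

theorem finite_setOf_smul_eq {x : α} [Finite (stabilizer Γ x)] (y : α) :
    {γ : Γ | γ • x = y}.Finite := by
  by_cases hy : ∃ g : Γ, y = g • x
  · obtain ⟨g, rfl⟩ := hy
    exact Set.finite_coe_iff.1 (Finite.of_equiv _ (smulEqEquivStabilizer g x).symm)
  · convert Set.finite_empty
    exact Set.eq_empty_of_forall_notMem fun γ h => hy ⟨γ, h.symm⟩

theorem finite_stabilizer_of_equivariant {f : α → β} (hf : ∀ (γ : Γ) a, f (γ • a) = γ • f a)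
    (a : α) [Finite (stabilizer Γ (f a))] : Finite (stabilizer Γ a) :=
  have hle : stabilizer Γ a ≤ stabilizer Γ (f a) := fun γ hγ => by
    rw [mem_stabilizer_iff, ← hf, mem_stabilizer_iff.1 hγ]
  Finite.of_injective _ (Subgroup.inclusion_injective hle)

theorem card_stabilizer_smul (g : Γ) (x : α) :
    Nat.card (stabilizer Γ (g • x)) = Nat.card (stabilizer Γ x) :=
  (Nat.card_congr (stabilizerEquivStabilizer rfl).toEquiv).symm

def repWeight (Γ : Type*) [Group Γ] [MulAction Γ α] (F : Set α) : α → ℝ≥0∞ :=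
  F.indicator fun x => (Nat.card (stabilizer Γ x) : ℝ≥0∞)⁻¹

theorem tsum_repWeight_smul {F : Set α}
    (hF : ∀ x : α, ∃! f, f ∈ F ∧ ∃ γ : Γ, γ • x = f) (x : α) [Finite (stabilizer Γ x)] :
    ∑' γ : Γ, repWeight Γ F (γ • x) = 1 := by
  obtain ⟨_, ⟨hf, g, rfl⟩, huniq⟩ := hF x
  have hweight : ∀ γ : Γ, repWeight Γ F (γ • x) =
      {γ | γ • x = g • x}.indicator (fun _ => (Nat.card (stabilizer Γ x) : ℝ≥0∞)⁻¹) γ := by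
    intro γ
    by_cases h : γ • x = g • x
    · rw [Set.indicator_of_mem (s := {γ | γ • x = g • x}) h, repWeight,
        Set.indicator_of_mem (h ▸ hf), card_stabilizer_smul]
    · rw [Set.indicator_of_notMem (s := {γ | γ • x = g • x}) h, repWeight,
        Set.indicator_of_notMem fun hγ => h (huniq _ ⟨hγ, γ, rfl⟩)]
  have : Finite {γ : Γ | γ • x = g • x} := Finite.of_equiv _ (smulEqEquivStabilizer g x).symm
  rw [tsum_congr hweight, ← tsum_subtype, ENNReal.tsum_const_of_finite,
    Nat.card_congr (smulEqEquivStabilizer g x)]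
  exact ENNReal.mul_inv_cancel (Nat.cast_ne_zero.2 Nat.card_pos.ne') (by simp)

end Transporter

section Cycles

variable {Γ E : Type*} [Group Γ] [MulAction Γ E]

def CycleRel (Γ : Type*) [Group Γ] [MulAction Γ E] (p : (ℕ → E) → Prop) (c c' : {c // p c}) :
    Prop :=
  ∃ (γ : Γ) (k : ℕ), ∀ i, (c' : ℕ → E) i = γ • (c : ℕ → E) (i + k)

theorem cycleRel_equivalence {p : (ℕ → E) → Prop} {m : ℕ} (hm : 0 < m)
    (hper : ∀ c, p c → Periodic c m) : Equivalence (CycleRel Γ p) where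
  refl _ := ⟨1, 0, fun _ => by simp⟩
  symm := by
    rintro c c' ⟨γ, k, h⟩
    refine ⟨γ⁻¹, k * m - k, fun i => ?_⟩
    have hk : k ≤ k * m := Nat.le_mul_of_pos_right k hm
    have hkm : c.1 (i + k * m) = c.1 i := by simpa using (hper _ c.2).nat_mul k i
    rw [h, inv_smul_smul, show i + (k * m - k) + k = i + k * m by omega, hkm]
  trans := by
    rintro c c' c'' ⟨γ, k, h⟩ ⟨γ', k', h'⟩
    exact ⟨γ' * γ, k' + k, fun i => by rw [h', h, mul_smul, add_assoc]⟩

variable (Γ) in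
def cycMap (c : ℕ → E) (x : ZMod (effLen c) × Γ) : ℕ → E :=
  fun i => x.2 • c (i + x.1.val)

section CycMap

variable {c : ℕ → E} {m : ℕ} (hm : 0 < m) (hc : Periodic c m)
include hm hc

theorem exists_cycMap_eq {c' : ℕ → E} {γ : Γ} {k : ℕ} (h : ∀ i, c' i = γ • c (i + k)) :
    ∃ x, cycMap Γ c x = c' :=
  ⟨(k, γ), funext fun i => by
    rw [h, cycMap, ZMod.val_natCast, (shift_eq_shift_iff hm hc).2 (Nat.mod_mod _ _)]⟩

theorem finite_cycStab [Finite (stabilizer Γ (c 0))] : (cycStab Γ c).Finite := by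
  refine ((Finset.range (effLen c)).finite_toSet.biUnion
    fun s _ => finite_setOf_smul_eq (Γ := Γ) (x := c 0) (c s)).subset fun δ ⟨s, hs⟩ => ?_
  refine Set.mem_biUnion (x := s % effLen c) (by simpa using Nat.mod_lt s (effLen_pos hm hc)) ?_
  show δ • c 0 = c (s % effLen c)
  rw [hs, zero_add, (periodic_effLen c).map_mod_nat]

def cycMapFiberEquiv (x₀ : ZMod (effLen c) × Γ) :
    {x | cycMap Γ c x = cycMap Γ c x₀} ≃ cycStab Γ c := by
  have := NeZero.of_pos (effLen_pos hm hc)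
  refine Equiv.ofBijective (fun x => ⟨x₀.2⁻¹ * x.1.2, ?_⟩) ⟨?_, ?_⟩
  · obtain ⟨⟨k, γ⟩, hx⟩ := x
    refine ⟨effLen c - k.val + x₀.1.val, fun j => ?_⟩
    have hk := ZMod.val_lt k
    have hx := congrFun hx (j + effLen c - k.val)
    simp only [cycMap] at hx
    rw [show j + effLen c - k.val + k.val = j + effLen c by omega, periodic_effLen c] at hx
    rw [mul_smul, hx, inv_smul_smul, ← add_assoc, Nat.add_sub_assoc hk.le]
  · rintro ⟨⟨k, γ⟩, hx⟩ ⟨⟨k', γ'⟩, hx'⟩ h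
    obtain rfl : γ = γ' := mul_left_cancel (congrArg Subtype.val h)
    have hkk' : ∀ i, c (i + k.val) = c (i + k'.val) := fun i => smul_left_cancel γ <|
      (congrFun hx i).trans (congrFun hx' i).symm
    rw [shift_eq_shift_iff hm hc, ← ZMod.natCast_eq_natCast_iff', ZMod.natCast_zmod_val,
      ZMod.natCast_zmod_val] at hkk'
    exact Subtype.ext (Prod.ext hkk' rfl)
  · rintro ⟨δ, s, hs⟩
    refine ⟨⟨(x₀.1 - s, x₀.2 * δ), funext fun i => ?_⟩, Subtype.ext (by simp)⟩
    simp only [cycMap, mul_smul, hs, add_assoc]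
    congr 1
    refine (shift_eq_shift_iff hm hc).2 ?_ i
    rw [← ZMod.natCast_eq_natCast_iff']
    push_cast [ZMod.natCast_zmod_val]
    ring

end CycMap

end Cycles

section ClassSum

variable {Γ E : Type*} [Group Γ] [MulAction Γ E] {p : (ℕ → E) → Prop} {m : ℕ}
  {F : Set E}

theorem tsum_repWeight_cycleClass (hm : 0 < m) (hper : ∀ c, p c → Periodic c m)
    (hinv : ∀ c (γ : Γ) k, p c → p fun i => γ • c (i + k))
    (hstab : ∀ x : E, Finite (stabilizer Γ x)) (hF : ∀ e : E, ∃! f, f ∈ F ∧ ∃ γ : Γ, γ • e = f)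
    (ξ : Quot (CycleRel Γ p)) :
    ∑' c : Quot.mk (CycleRel Γ p) ⁻¹' {ξ}, repWeight Γ F (c.1.1 0) =
      effLen ξ.out.1 / Nat.card (cycStab Γ ξ.out.1) := by
  set c₀ := ξ.out
  have hc₀ := hper _ c₀.2
  have := NeZero.of_pos (effLen_pos hm hc₀)
  let Φ (x : ZMod (effLen c₀.1) × Γ) : Quot.mk (CycleRel Γ p) ⁻¹' {ξ} :=
    ⟨⟨cycMap Γ c₀.1 x, hinv _ _ _ c₀.2⟩,
      (Quot.sound ⟨x.2, x.1.val, fun _ => rfl⟩).symm.trans (Quot.out_eq ξ)⟩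
  have hsurj : ∀ c, ∃ x, Φ x = c := by
    rintro ⟨c, hc⟩
    obtain ⟨γ, k, h⟩ := (cycleRel_equivalence hm hper).eqvGen_iff.1 <|
      Quot.eqvGen_exact ((Quot.out_eq ξ).trans hc.symm)
    obtain ⟨x, hx⟩ := exists_cycMap_eq hm hc₀ h
    exact ⟨x, Subtype.ext (Subtype.ext hx)⟩
  have hfiber (x₀) : Φ ⁻¹' {Φ x₀} ≃ cycStab Γ c₀.1 := by
    refine (Equiv.setCongr ?_).trans (cycMapFiberEquiv hm hc₀ x₀)
    ext x
    simp [Φ, Subtype.ext_iff]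
  have : Finite (cycStab Γ c₀.1) := finite_cycStab hm hc₀
  have : Nonempty (cycStab Γ c₀.1) := ⟨⟨1, 0, by simp⟩⟩
  have hS : (Nat.card (cycStab Γ c₀.1) : ℝ≥0∞) ≠ 0 := Nat.cast_ne_zero.2 Nat.card_pos.ne'
  rw [ENNReal.eq_div_iff hS (by simp)]
  calc (Nat.card (cycStab Γ c₀.1) : ℝ≥0∞) * ∑' c : Quot.mk _ ⁻¹' {ξ}, repWeight Γ F (c.1.1 0)
      = ∑' c, ∑' x : Φ ⁻¹' {c}, repWeight Γ F ((Φ x).1.1 0) := by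
        rw [← ENNReal.tsum_mul_left]
        refine tsum_congr fun c => ?_
        obtain ⟨x₀, rfl⟩ := hsurj c
        have := Finite.of_equiv _ (hfiber x₀).symm
        rw [tsum_congr fun x : Φ ⁻¹' {Φ x₀} => congrArg (fun c => repWeight Γ F (c.1.1 0)) x.2,
          ENNReal.tsum_const_of_finite, Nat.card_congr (hfiber x₀)]
    _ = ∑' x : ZMod (effLen c₀.1) × Γ, repWeight Γ F (x.2 • c₀.1 x.1.val) := by
        rw [ENNReal.tsum_fiberwise (fun x => repWeight Γ F ((Φ x).1.1 0)) Φ]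
        simp [Φ, cycMap]
    _ = effLen c₀.1 := by
        rw [ENNReal.tsum_prod']
        simp [tsum_repWeight_smul hF]

theorem tsum_card_startingAt_mul_inv_eq_tsum_cycleClass (hm : 0 < m)
    (hper : ∀ c, p c → Periodic c m)
    (hinv : ∀ c (γ : Γ) k, p c → p fun i => γ • c (i + k))
    (hstab : ∀ x : E, Finite (stabilizer Γ x)) (hF : ∀ e : E, ∃! f, f ∈ F ∧ ∃ γ : Γ, γ • e = f) :
    ∑' e : F, (ENat.card {c : {c // p c} // c.1 0 = e} : ℝ≥0∞) *
        (Nat.card (stabilizer Γ (e : E)) : ℝ≥0∞)⁻¹ =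
      ∑' ξ : Quot (CycleRel Γ p), (effLen ξ.out.1 : ℝ≥0∞) / Nat.card (cycStab Γ ξ.out.1) := by
  calc _ = ∑' e : E, ∑' c : (fun c : {c // p c} => c.1 0) ⁻¹' {e}, repWeight Γ F (c.1.1 0) := by
        rw [tsum_subtype F fun e => (ENat.card {c : {c // p c} // c.1 0 = e} : ℝ≥0∞) *
          (Nat.card (stabilizer Γ e) : ℝ≥0∞)⁻¹]
        refine tsum_congr fun e => ?_
        rw [tsum_congr fun c => congrArg (repWeight Γ F) c.2, ENNReal.tsum_const, repWeight,
          Set.indicator_mul_right]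
        rfl
    _ = ∑' ξ, ∑' c : Quot.mk (CycleRel Γ p) ⁻¹' {ξ}, repWeight Γ F (c.1.1 0) := by
        rw [ENNReal.tsum_fiberwise (fun c : {c // p c} => repWeight Γ F (c.1 0)),
          ENNReal.tsum_fiberwise (fun c : {c // p c} => repWeight Γ F (c.1 0))]
    _ = _ := tsum_congr (tsum_repWeight_cycleClass hm hper hinv hstab hF)

end ClassSum

section SerreGraph

variable {V E Γ : Type*} {o t : E → V} {bar : E → E}

/-- `b` may follow `a` in a reduced path; `a ≠ bar b` rather than `b ≠ bar a` makes
`{a // NonBacktracking o t bar a b}` the index set of the sum defining `T`. -/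
def NonBacktracking (o t : E → V) (bar : E → E) (a b : E) : Prop :=
  t a = o b ∧ a ≠ bar b

def nonBacktrackingPredEmbedding (hbar_invol : ∀ e, bar (bar e) = e)
    (ho_bar : ∀ e, o (bar e) = t e) (b : E) :
    {a // NonBacktracking o t bar a b} ↪ {x : E // o x = o b} where
  toFun a := ⟨bar a, (ho_bar a).trans a.2.1⟩
  inj' a a' h := Subtype.ext <| by
    simpa [hbar_invol] using congrArg (bar ·.1) h

theorem finite_nonBacktracking_pred (hbar_invol : ∀ e, bar (bar e) = e)
    (ho_bar : ∀ e, o (bar e) = t e) (hfib : ∀ v, {e | o e = v}.Finite) (b : E) :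
    Finite {a // NonBacktracking o t bar a b} :=
  have : Finite {x // o x = o b} := (hfib (o b)).to_subtype
  Finite.of_injective _ (nonBacktrackingPredEmbedding hbar_invol ho_bar b).injective

theorem card_nonBacktracking_pred_le (hbar_invol : ∀ e, bar (bar e) = e)
    (ho_bar : ∀ e, o (bar e) = t e) (hfib : ∀ v, {e | o e = v}.Finite) {d : ℕ}
    (hdeg : ∀ v, Nat.card {e // o e = v} ≤ d) (b : E) :
    Nat.card {a // NonBacktracking o t bar a b} ≤ d :=
  have : Finite {x // o x = o b} := (hfib (o b)).to_subtype
  (Nat.card_le_card_of_injective _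
    (nonBacktrackingPredEmbedding hbar_invol ho_bar b).injective).trans (hdeg _)

theorem isClosedPath_and_isReducedPath_iff (hbar_invol : ∀ e, bar (bar e) = e) {m : ℕ}
    {c : ℕ → E} : IsClosedPath o t m c ∧ IsReducedPath bar c ↔
      Periodic c m ∧ ∀ i, NonBacktracking o t bar (c i) (c (i + 1)) := by
  have hrev : ∀ a b : E, b ≠ bar a ↔ a ≠ bar b := fun a b => by
    rw [not_iff_not]; exact ⟨fun h => by rw [h, hbar_invol], fun h => by rw [h, hbar_invol]⟩
  simp only [IsClosedPath, IsReducedPath, NonBacktracking, hrev, forall_and]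
  exact ⟨fun ⟨⟨h1, h2⟩, h3⟩ => ⟨h2, h1, h3⟩, fun ⟨h2, h1, h3⟩ => ⟨⟨h1, h2⟩, h3⟩⟩

theorem enatCard_closedReducedPath_startingAt (hbar_invol : ∀ e, bar (bar e) = e)
    (hpred : ∀ b, Finite {a // NonBacktracking o t bar a b}) {m : ℕ} (hm : 0 < m) (e : E) :
    ENat.card {c : {c // IsClosedPath o t m c ∧ IsReducedPath bar c} // c.1 0 = e} =
      Nat.card (RelWalk (NonBacktracking o t bar) m e e) := by
  have := finite_relWalk hpred m e e
  rw [← ENat.card_eq_coe_natCard]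
  refine ENat.card_congr ((Equiv.subtypeEquiv (q := fun c : {c // Periodic c m ∧
      ∀ i, NonBacktracking o t bar (c i) (c (i + 1))} => c.1 0 = e)
    (Equiv.subtypeEquivRight fun _ => isClosedPath_and_isReducedPath_iff hbar_invol)
    fun _ => Iff.rfl).trans (periodicChainEquivRelWalk hm e))

theorem IsClosedPath.smul_shift [Group Γ] [MulAction Γ V] [MulAction Γ E]
    (ho_smul : ∀ (γ : Γ) (e : E), o (γ • e) = γ • o e)
    (ht_smul : ∀ (γ : Γ) (e : E), t (γ • e) = γ • t e) {m : ℕ} {c : ℕ → E}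
    (hc : IsClosedPath o t m c) (γ : Γ) (k : ℕ) : IsClosedPath o t m fun i => γ • c (i + k) :=
  ⟨fun i => by rw [ht_smul, ho_smul, hc.1, add_right_comm],
    fun i => by simp only [add_right_comm i m k, hc.2]⟩

theorem IsReducedPath.smul_shift [Group Γ] [MulAction Γ E]
    (hbar_smul : ∀ (γ : Γ) (e : E), bar (γ • e) = γ • bar e) {c : ℕ → E}
    (hc : IsReducedPath bar c) (γ : Γ) (k : ℕ) : IsReducedPath bar fun i => γ • c (i + k) :=
  fun i h => hc (i + k) <| smul_left_cancel γ <| by rwa [← hbar_smul, add_right_comm]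

end SerreGraph

theorem trace_Tm_eq_Nm_general
    {V E Γ : Type*} [DecidableEq E]
    [Group Γ] [MulAction Γ V] [MulAction Γ E]
    -- the graph in the sense of Serre, connected, with degrees bounded by d
    (o t : E → V) (bar : E → E)
    (hbar_invol : ∀ e, bar (bar e) = e)
    (ho_bar : ∀ e, o (bar e) = t e)
    (d : ℕ) (hfib : ∀ v, {e | o e = v}.Finite)
    (hdeg : ∀ v, Nat.card {e // o e = v} ≤ d)
    -- Γ acts by automorphisms of the graph
    (ho_smul : ∀ (γ : Γ) (e : E), o (γ • e) = γ • o e)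
    (ht_smul : ∀ (γ : Γ) (e : E), t (γ • e) = γ • t e)
    (hbar_smul : ∀ (γ : Γ) (e : E), bar (γ • e) = γ • bar e)
    -- discretely (finite vertex stabilizers)
    (hstab : ∀ v : V, Finite (MulAction.stabilizer Γ v))
    -- bounded covolume, w.r.t. a set 𝓕₁ of representatives of the Γ-orbits of edges
    (F1 : Set E) (hF1 : ∀ e : E, ∃! f, f ∈ F1 ∧ ∃ γ : Γ, γ • e = f)
    (hcovol : Summable fun e : F1 => (1 : ℝ) / Nat.card (MulAction.stabilizer Γ (e : E)))
    -- the operator T on ℓ²(EX)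
    (T : lp (fun _ : E => ℂ) 2 →L[ℂ] lp (fun _ : E => ℂ) 2)
    (hT : ∀ (ω : lp (fun _ : E => ℂ) 2) (e : E),
      T ω e = ∑' e' : {e' : E // t e' = o e ∧ e' ≠ bar e}, ω (e' : E))
    (m : ℕ) (hm : 1 ≤ m) :
    -- N_m^Γ converges:
    Summable (fun ξ : Quot (fun c c' : {c : ℕ → E //
          IsClosedPath o t m c ∧ IsReducedPath bar c} =>
        ∃ (γ : Γ) (k : ℕ), ∀ i, (c' : ℕ → E) i = γ • (c : ℕ → E) (i + k)) =>
      (effLen (ξ.out : ℕ → E) : ℝ) / Nat.card (cycStab Γ (ξ.out : ℕ → E))) ∧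
    -- the trace of T^m is an absolutely convergent sum:
    Summable (fun e : F1 => (1 : ℂ) / Nat.card (MulAction.stabilizer Γ (e : E)) *
      ((T ^ m) (lp.single 2 (e : E) 1)) (e : E)) ∧
    -- Tr_Γ(T^m) = N_m^Γ:
    ∑' e : F1, (1 : ℂ) / Nat.card (MulAction.stabilizer Γ (e : E)) *
        ((T ^ m) (lp.single 2 (e : E) 1)) (e : E) =
      ((∑' ξ : Quot (fun c c' : {c : ℕ → E //
            IsClosedPath o t m c ∧ IsReducedPath bar c} =>
          ∃ (γ : Γ) (k : ℕ), ∀ i, (c' : ℕ → E) i = γ • (c : ℕ → E) (i + k)),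
        (effLen (ξ.out : ℕ → E) : ℝ) / Nat.card (cycStab Γ (ξ.out : ℕ → E)) : ℝ) : ℂ) := by
  have hpred := finite_nonBacktracking_pred hbar_invol ho_bar hfib
  have hEstab (e : E) : Finite (MulAction.stabilizer Γ e) :=
    finite_stabilizer_of_equivariant ho_smul e
  have hsum := tsum_card_startingAt_mul_inv_eq_tsum_cycleClass
    (p := fun c => IsClosedPath o t m c ∧ IsReducedPath bar c) hm (fun _ hc => hc.1.2)
    (fun _ γ k hc => ⟨hc.1.smul_shift ho_smul ht_smul γ k, hc.2.smul_shift hbar_smul γ k⟩)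
    hEstab hF1
  simp only [enatCard_closedReducedPath_startingAt hbar_invol hpred hm, ENat.toENNReal_coe] at hsum
  have hwalk_le := card_relWalk_le hpred (card_nonBacktracking_pred_le hbar_invol ho_bar hfib hdeg)
  obtain ⟨hsumTr, hsumN, htsum⟩ := ENNReal.summable_toReal_and_tsum_toReal_eq hsum
    (ENNReal.tsum_mul_inv_natCast_ne_top (fun e => hwalk_le m e e) (fun _ => Nat.card_pos.ne')
      hcovol)
  have hterm (e : F1) : (1 : ℂ) / Nat.card (MulAction.stabilizer Γ (e : E)) *
      ((T ^ m) (lp.single 2 (e : E) 1)) (e : E) =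
        (((Nat.card (RelWalk (NonBacktracking o t bar) m e e) : ℝ≥0∞) *
          (Nat.card (MulAction.stabilizer Γ (e : E)) : ℝ≥0∞)⁻¹).toReal : ℂ) := by
    rw [pow_apply_single_eq_card_relWalk hpred T hT]
    simp [ENNReal.toReal_mul, div_eq_inv_mul, mul_comm]
  have hclass (ξ : Quot (CycleRel Γ fun c => IsClosedPath o t m c ∧ IsReducedPath bar c)) :
      (effLen ξ.out.1 : ℝ) / Nat.card (cycStab Γ ξ.out.1) =
        ((effLen ξ.out.1 : ℝ≥0∞) / Nat.card (cycStab Γ ξ.out.1)).toReal := by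
    simp [ENNReal.toReal_div]
  refine ⟨hsumN.congr fun ξ => (hclass ξ).symm,
    (Complex.summable_ofReal.2 hsumTr).congr fun e => (hterm e).symm, ?_⟩
  rw [tsum_congr hterm, ← Complex.ofReal_tsum, htsum]
  exact congrArg _ (tsum_congr hclass).symm

/-- Proposition 2.6 (iii): `Tr_Γ(T^m) = N_m^Γ`, where
`N_m^Γ = Σ_ξ ℓ(ξ)/S(ξ)` over the `Γ`-equivalence classes `ξ` of reduced cycles
of length `m` (the sum converging). -/
theorem trace_Tm_eq_Nm
    {V E Γ : Type*} [Countable V] [Countable E] [DecidableEq E]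
    [Group Γ] [Countable Γ] [MulAction Γ V] [MulAction Γ E]
    -- the graph in the sense of Serre, connected, with degrees bounded by d
    (o t : E → V) (bar : E → E)
    (hbar_invol : ∀ e, bar (bar e) = e)
    (hbar_ne : ∀ e, bar e ≠ e)
    (ho_bar : ∀ e, o (bar e) = t e)
    (hconn : ∀ u v : V, Relation.ReflTransGen (fun a b => ∃ e, o e = a ∧ t e = b) u v)
    (d : ℕ) (hfib : ∀ v, {e | o e = v}.Finite)
    (hdeg : ∀ v, Nat.card {e // o e = v} ≤ d)
    -- Γ acts by automorphisms of the graph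
    (ho_smul : ∀ (γ : Γ) (e : E), o (γ • e) = γ • o e)
    (ht_smul : ∀ (γ : Γ) (e : E), t (γ • e) = γ • t e)
    (hbar_smul : ∀ (γ : Γ) (e : E), bar (γ • e) = γ • bar e)
    -- without inversions
    (hnoinv : ∀ (γ : Γ) (e : E), γ • e ≠ bar e)
    -- discretely (finite vertex stabilizers)
    (hstab : ∀ v : V, Finite (MulAction.stabilizer Γ v))
    -- bounded covolume, w.r.t. a set 𝓕₁ of representatives of the Γ-orbits of edges
    (F1 : Set E) (hF1 : ∀ e : E, ∃! f, f ∈ F1 ∧ ∃ γ : Γ, γ • e = f)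
    (hcovol : Summable fun e : F1 => (1 : ℝ) / Nat.card (MulAction.stabilizer Γ (e : E)))
    -- the operator T on ℓ²(EX)
    (T : lp (fun _ : E => ℂ) 2 →L[ℂ] lp (fun _ : E => ℂ) 2)
    (hT : ∀ (ω : lp (fun _ : E => ℂ) 2) (e : E),
      T ω e = ∑' e' : {e' : E // t e' = o e ∧ e' ≠ bar e}, ω (e' : E))
    (m : ℕ) (hm : 1 ≤ m) :
    -- N_m^Γ converges:
    Summable (fun ξ : Quot (fun c c' : {c : ℕ → E //
          IsClosedPath o t m c ∧ IsReducedPath bar c} =>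
        ∃ (γ : Γ) (k : ℕ), ∀ i, (c' : ℕ → E) i = γ • (c : ℕ → E) (i + k)) =>
      (effLen (ξ.out : ℕ → E) : ℝ) / Nat.card (cycStab Γ (ξ.out : ℕ → E))) ∧
    -- the trace of T^m is an absolutely convergent sum:
    Summable (fun e : F1 => (1 : ℂ) / Nat.card (MulAction.stabilizer Γ (e : E)) *
      ((T ^ m) (lp.single 2 (e : E) 1)) (e : E)) ∧
    -- Tr_Γ(T^m) = N_m^Γ:
    ∑' e : F1, (1 : ℂ) / Nat.card (MulAction.stabilizer Γ (e : E)) *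
        ((T ^ m) (lp.single 2 (e : E) 1)) (e : E) =
      ((∑' ξ : Quot (fun c c' : {c : ℕ → E //
            IsClosedPath o t m c ∧ IsReducedPath bar c} =>
          ∃ (γ : Γ) (k : ℕ), ∀ i, (c' : ℕ → E) i = γ • (c : ℕ → E) (i + k)),
        (effLen (ξ.out : ℕ → E) : ℝ) / Nat.card (cycStab Γ (ξ.out : ℕ → E)) : ℝ) : ℂ) :=
  trace_Tm_eq_Nm_general o t bar hbar_invol ho_bar d hfib hdeg ho_smul ht_smul hbar_smul hstab F1
    hF1 hcovol T hT m hm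
end
end

section
/- Assume d≥2. The series Σ_{[C]_Γ} (1/|Γ_C|)·Log(1−u^{|C|}), summed over all Γ-equivalence classes of prime cycles (Log the principal branch of the logarithm), converges absolutely and uniformly on compact subsets of the open disc {u∈ℂ : |u|<1/(d−1)}; consequently the Ihara zeta function Z_{X,Γ}(u) defined by the Euler product Π_{[C]_Γ}(1−u^{|C|})^{−1/|Γ_C|} = exp(−Σ_{[C]_Γ}(1/|Γ_C|)Log(1−u^{|C|})) is a holomorphic, nowhere-vanishing function on this disc. -/
noncomputable section

/-- The set of `Γ`-equivalence classes of prime (primitive reduced) cycles: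
primitive reduced closed paths (of positive length equal to their effective length),
up to cyclic shift and up to the action of `Γ`. -/
def PrimeCycleQuot {V E : Type*} (Γ : Type*) [Group Γ] [MulAction Γ E]
    (o t : E → V) (bar : E → E) : Type _ :=
  Quot (fun p p' : {p : ℕ × (ℕ → E) // 0 < p.1 ∧ IsClosedPath o t p.1 p.2 ∧
      IsReducedPath bar p.2 ∧ effLen p.2 = p.1} =>
    (p : ℕ × (ℕ → E)).1 = (p' : ℕ × (ℕ → E)).1 ∧
      ∃ (γ : Γ) (k : ℕ), ∀ i, (p' : ℕ × (ℕ → E)).2 i = γ • (p : ℕ × (ℕ → E)).2 (i + k))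

/-- The length `|C|` of a `Γ`-class of prime cycles. -/
def primeLen {V E : Type*} (Γ : Type*) [Group Γ] [MulAction Γ E]
    (o t : E → V) (bar : E → E) (ξ : PrimeCycleQuot Γ o t bar) : ℕ :=
  ((Quot.out ξ : {p : ℕ × (ℕ → E) // 0 < p.1 ∧ IsClosedPath o t p.1 p.2 ∧
      IsReducedPath bar p.2 ∧ effLen p.2 = p.1}) : ℕ × (ℕ → E)).1

/-- The cardinality `|Γ_C|` of the stabilizer of a `Γ`-class of prime cycles. -/
def primeStab {V E : Type*} (Γ : Type*) [Group Γ] [MulAction Γ E]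
    (o t : E → V) (bar : E → E) (ξ : PrimeCycleQuot Γ o t bar) : ℕ :=
  Nat.card (cycStab Γ (((Quot.out ξ : {p : ℕ × (ℕ → E) // 0 < p.1 ∧
      IsClosedPath o t p.1 p.2 ∧ IsReducedPath bar p.2 ∧ effLen p.2 = p.1}) :
    ℕ × (ℕ → E)).2))

/-- The Ihara zeta function of the periodic graph `(X,Γ)`, defined by the Euler product
`Z(u) = Π_{[C]_Γ prime} (1−u^{|C|})^{−1/|Γ_C|}
      = exp(−Σ_{[C]_Γ} (1/|Γ_C|) Log(1−u^{|C|}))`. -/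
def ZetaIhara {V E : Type*} (Γ : Type*) [Group Γ] [MulAction Γ E]
    (o t : E → V) (bar : E → E) (u : ℂ) : ℂ :=
  Complex.exp (-∑' ξ : PrimeCycleQuot Γ o t bar,
    (1 / (primeStab Γ o t bar ξ) : ℂ) * Complex.log (1 - u ^ (primeLen Γ o t bar ξ)))


/-!
A class `C` of prime cycles has a representative starting at an edge `e` of the fundamental
set `F1`, and by orbit–stabilizer its `Γ_e`-translates are at least `|Γ_e| / |Γ_C|` distinct
closed paths starting at `e`. Hence `∑_C r^|C| / |Γ_C|` is bounded by
`∑_{e ∈ F1} |Γ_e|⁻¹ ∑_m r^m · #{reduced paths of length m from e}`, and there are at most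
`(d - 1)^(m - 1)` such paths, so bounded covolume makes this finite for `r < 1 / (d - 1)`.
Since `‖log (1 - w)‖ ≤ ‖w‖ / (1 - ‖w‖)`, the Weierstrass M-test gives absolute and locally
uniform convergence of the logarithmic series; its sum is holomorphic, and `Z = exp (-∑ …)`
never vanishes.
-/

section PathsFrom

open Finset

variable {α : Type*} [DecidableEq α]

/-- Reversed lists `[a_m, …, a_1, a_0]` with `a_0 = a` and `a_{i+1} ∈ next a_i`. -/
def pathsFrom (next : α → Finset α) (a : α) : ℕ → Finset (List α)
  | 0 => {[a]}
  | m + 1 => (pathsFrom next a m).biUnion fun l => (next (l.headD a)).image (· :: l)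

theorem card_pathsFrom_le {next : α → Finset α} {N : ℕ} (hnext : ∀ b, #(next b) ≤ N)
    (a : α) (m : ℕ) : #(pathsFrom next a m) ≤ N ^ m := by
  induction m with
  | zero => simp [pathsFrom]
  | succ m ih =>
    calc #(pathsFrom next a (m + 1))
        ≤ ∑ l ∈ pathsFrom next a m, #((next (l.headD a)).image (· :: l)) := card_biUnion_le
      _ ≤ #(pathsFrom next a m) * N :=
        sum_le_card_nsmul _ _ _ fun l _ => card_image_le.trans (hnext _)
      _ ≤ N ^ (m + 1) := by rw [pow_succ]; exact Nat.mul_le_mul_right N ih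

theorem reverse_map_range_mem_pathsFrom {next : α → Finset α} {c : ℕ → α}
    (hc : ∀ i, c (i + 1) ∈ next (c i)) (m : ℕ) :
    ((List.range (m + 1)).map c).reverse ∈ pathsFrom next (c 0) m := by
  induction m with
  | zero => simp [pathsFrom]
  | succ m ih =>
    rw [pathsFrom, mem_biUnion]
    refine ⟨_, ih, mem_image.2 ⟨c (m + 1), ?_, ?_⟩⟩
    · simpa [List.range_succ] using hc m
    · simp [List.range_succ (n := m + 1)]

end PathsFrom

open Finset in
theorem summable_sigma_finset_mul_pow {β γ : Type*} {A : β → ℝ} (hA0 : ∀ a, 0 ≤ A a)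
    (hA : Summable A) {s : β → ℕ → Finset γ} {N : ℕ} (hs : ∀ a m, #(s a m) ≤ N ^ m)
    {r : ℝ} (hr0 : 0 ≤ r) (hr : r * N < 1) :
    Summable fun z : Σ a, Σ m, s a m => A z.1 * r ^ z.2.1 := by
  have hq0 : 0 ≤ r * N := by positivity
  have hterm0 : ∀ a m, 0 ≤ A a * r ^ m := fun a m => by have := hA0 a; positivity
  have hlayer : ∀ a m, ∑' _ : s a m, A a * r ^ m ≤ A a * (r * N) ^ m := fun a m => by
    rw [tsum_fintype, sum_const, card_univ, Fintype.card_coe, nsmul_eq_mul]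
    calc (#(s a m) : ℝ) * (A a * r ^ m) ≤ (N : ℝ) ^ m * (A a * r ^ m) := by
          gcongr
          · exact hterm0 a m
          · exact_mod_cast hs a m
      _ = A a * (r * N) ^ m := by ring
  have hgeom : Summable fun m : ℕ => (r * N) ^ m := summable_geometric_of_lt_one hq0 hr
  have hinner : ∀ a, Summable fun y : Σ m, s a m => A a * r ^ y.1 := fun a =>
    (summable_sigma_of_nonneg fun _ => hterm0 _ _).2
      ⟨fun _ => .of_finite, .of_nonneg_of_le (fun _ => tsum_nonneg fun _ => hterm0 _ _)
        (hlayer a) (hgeom.mul_left _)⟩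
  refine (summable_sigma_of_nonneg fun _ => hterm0 _ _).2 ⟨hinner, ?_⟩
  refine .of_nonneg_of_le (fun _ => tsum_nonneg fun _ => hterm0 _ _) (fun a => ?_)
    (hA.mul_right (1 - r * N)⁻¹)
  calc ∑' y : Σ m, s a m, A a * r ^ y.1 = ∑' m, ∑' _ : s a m, A a * r ^ m :=
        (hinner a).tsum_sigma' fun _ => .of_finite
    _ ≤ ∑' m, A a * (r * N) ^ m :=
        Summable.tsum_le_tsum (hlayer a) (.of_nonneg_of_le
          (fun _ => tsum_nonneg fun _ => hterm0 _ _) (hlayer a) (hgeom.mul_left _))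
          (hgeom.mul_left _)
    _ = A a * (1 - r * N)⁻¹ := by rw [tsum_mul_left, tsum_geometric_of_lt_one hq0 hr]

theorem summable_of_le_tsum_fiber {α β : Type*} {π : α → β} {f : α → ℝ}
    (hf : Summable f) {g : β → ℝ} (hg0 : ∀ b, 0 ≤ g b)
    (hgf : ∀ b, g b ≤ ∑' a : {a // π a = b}, f a) : Summable g :=
  .of_nonneg_of_le hg0 hgf ((Equiv.sigmaFiberEquiv π).summable_iff.2 hf).sigma

theorem Function.Periodic.eq_of_forall_lt {α : Type*} {c c' : ℕ → α} {m : ℕ} (hm : 0 < m)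
    (hc : Function.Periodic c m) (hc' : Function.Periodic c' m) (h : ∀ i < m, c i = c' i) :
    c = c' := funext fun i => by
  rw [← hc.map_mod_nat, ← hc'.map_mod_nat, h _ (Nat.mod_lt i hm)]

theorem MulAction.natCard_stabilizer_mul_natCard_orbit {G X : Type*} [Group G] [MulAction G X]
    (x : X) : Nat.card (stabilizer G x) * Nat.card (orbit G x) = Nat.card G := by
  rw [← (stabilizer G x).card_mul_index, index_stabilizer, Nat.card_coe_set_eq]

theorem finite_stabilizer_of_origin {V E Γ : Type*} [Group Γ] [MulAction Γ V] [MulAction Γ E]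
    {o : E → V} (ho_smul : ∀ (γ : Γ) (e : E), o (γ • e) = γ • o e)
    (hstab : ∀ v : V, Finite (MulAction.stabilizer Γ v)) (e : E) :
    Finite (MulAction.stabilizer Γ e) :=
  Finite.Set.subset (MulAction.stabilizer Γ (o e) : Set Γ) fun γ (hγ : γ • e = e) =>
    show γ • o e = o e by rw [← ho_smul, hγ]

theorem natCard_stabilizer_smul_le_cycStab {E Γ : Type*} [Group Γ] [MulAction Γ E]
    (H : Subgroup Γ) (γ₀ : Γ) (c : ℕ → E) [Finite (cycStab Γ c)] :
    Nat.card (MulAction.stabilizer H (γ₀ • c)) ≤ Nat.card (cycStab Γ c) := by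
  refine Nat.card_le_card_of_injective
    (fun h => ⟨γ₀⁻¹ * h * γ₀, 0, fun i => ?_⟩) fun h h' hh => ?_
  · have hfix : (h : Γ) • γ₀ • c i = γ₀ • c i := congrFun h.2 i
    rw [add_zero, mul_smul, mul_smul, hfix, inv_smul_smul]
  · exact Subtype.ext (Subtype.ext (by simpa using congrArg Subtype.val hh))

section PrimePaths

open Finset

variable {V E : Type*} (o t : E → V) (bar : E → E)

abbrev IsPrimePath (m : ℕ) (c : ℕ → E) : Prop :=
  0 < m ∧ IsClosedPath o t m c ∧ IsReducedPath bar c ∧ effLen c = m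

abbrev PrimePath : Type _ := {p : ℕ × (ℕ → E) // IsPrimePath o t bar p.1 p.2}

abbrev BasedPrimePath (F : Set E) : Type _ := {p : PrimePath o t bar // p.1.2 0 ∈ F}

def nonBacktracking [DecidableEq E] (hfib : ∀ v, {e | o e = v}.Finite) (e : E) : Finset E :=
  (hfib (t e)).toFinset.erase (bar e)

variable {o t bar}

theorem card_nonBacktracking_le [DecidableEq E] {hfib : ∀ v, {e | o e = v}.Finite}
    (ho_bar : ∀ e, o (bar e) = t e) {d : ℕ} (hdeg : ∀ v, Nat.card {e // o e = v} ≤ d)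
    (e : E) : #(nonBacktracking o t bar hfib e) ≤ d - 1 := by
  have hcard : #(hfib (t e)).toFinset = Nat.card {e' // o e' = t e} := by
    rw [← Set.ncard_eq_toFinset_card _ (hfib _), ← Nat.card_coe_set_eq]; rfl
  rw [nonBacktracking, card_erase_of_mem (by simp [ho_bar]), hcard]
  exact Nat.sub_le_sub_right (hdeg _) 1

theorem IsReducedPath.mem_nonBacktracking [DecidableEq E] {hfib : ∀ v, {e | o e = v}.Finite}
    {m : ℕ} {c : ℕ → E} (hcl : IsClosedPath o t m c) (hred : IsReducedPath bar c) (i : ℕ) :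
    c (i + 1) ∈ nonBacktracking o t bar hfib (c i) := by
  simp [nonBacktracking, hcl.1 i, hred i]

variable {Γ : Type*} [Group Γ] [MulAction Γ E]

theorem effLen_smul (γ : Γ) (c : ℕ → E) : effLen (γ • c) = effLen c := by
  simp [effLen, smul_left_cancel_iff]

theorem IsPrimePath.smul [MulAction Γ V] (ho_smul : ∀ (γ : Γ) (e : E), o (γ • e) = γ • o e)
    (ht_smul : ∀ (γ : Γ) (e : E), t (γ • e) = γ • t e)
    (hbar_smul : ∀ (γ : Γ) (e : E), bar (γ • e) = γ • bar e) (γ : Γ) {m : ℕ} {c : ℕ → E}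
    (h : IsPrimePath o t bar m c) : IsPrimePath o t bar m (γ • c) := by
  obtain ⟨hm, ⟨hcl, hper⟩, hred, heff⟩ := h
  refine ⟨hm, ⟨fun i => ?_, fun i => ?_⟩, fun i => ?_, (effLen_smul γ c).trans heff⟩
  · simp [ht_smul, ho_smul, hcl i]
  · simp [hper i]
  · simpa [hbar_smul] using hred i

variable (Γ) in
def primePathWeight (r : ℝ) (p : PrimePath o t bar) : ℝ :=
  1 / Nat.card (MulAction.stabilizer Γ (p.1.2 0)) * r ^ p.1.1

theorem primePathWeight_nonneg {r : ℝ} (hr0 : 0 ≤ r) (p : PrimePath o t bar) :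
    0 ≤ primePathWeight Γ r p := by
  unfold primePathWeight
  positivity

theorem summable_basedPrimePath_weight [DecidableEq E] (hfib : ∀ v, {e | o e = v}.Finite)
    (ho_bar : ∀ e, o (bar e) = t e) {d : ℕ} (hdeg : ∀ v, Nat.card {e // o e = v} ≤ d)
    {F : Set E}
    (hcovol : Summable fun e : F => (1 : ℝ) / Nat.card (MulAction.stabilizer Γ (e : E)))
    {r : ℝ} (hr0 : 0 ≤ r) (hr : r * ((d - 1 : ℕ) : ℝ) < 1) :
    Summable fun p : BasedPrimePath o t bar F => primePathWeight Γ r p.1 := by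
  let ι (p : BasedPrimePath o t bar F) :
      Σ e : F, Σ m, pathsFrom (nonBacktracking o t bar hfib) (e : E) m :=
    ⟨⟨_, p.2⟩, p.1.1.1 - 1, _,
      reverse_map_range_mem_pathsFrom (p.1.2.2.2.1.mem_nonBacktracking p.1.2.2.1) _⟩
  have hι : Function.Injective ι := by
    rintro ⟨⟨⟨m, c⟩, hm : 0 < m, hc, _⟩, _⟩ ⟨⟨⟨m', c'⟩, hm' : 0 < m', hc', _⟩, _⟩ h
    have hlen : m - 1 = m' - 1 := congrArg (fun z => z.2.1) h
    have hlist := congrArg (fun z => (z.2.2 : List E)) h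
    simp only [ι, hlen, List.reverse_inj, List.map_inj_left, List.mem_range] at hlist
    have hmm' : m = m' := by omega
    subst hmm'
    have hcc' : c = c' :=
      Function.Periodic.eq_of_forall_lt hm hc.2 hc'.2 fun i hi => hlist i (by omega)
    subst hcc'
    rfl
  have hsum := summable_sigma_finset_mul_pow (fun _ => by positivity) hcovol
    (fun e => card_pathsFrom_le (card_nonBacktracking_le (hfib := hfib) ho_bar hdeg) (e : E))
    hr0 hr
  refine ((hsum.comp_injective hι).mul_left r).congr fun p => ?_
  obtain ⟨⟨⟨m, c⟩, hm : 0 < m, -⟩, -⟩ := p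
  simp only [ι, Function.comp_apply, primePathWeight]
  conv_rhs => rw [← Nat.sub_add_cancel hm]
  ring

theorem primeCycleQuot_mk_eq_of_smul {m : ℕ} {c c' : ℕ → E} {hc : IsPrimePath o t bar m c}
    {hc' : IsPrimePath o t bar m c'} (γ : Γ) (h : c' = γ • c) :
    (Quot.mk _ ⟨(m, c'), hc'⟩ : PrimeCycleQuot Γ o t bar) = Quot.mk _ ⟨(m, c), hc⟩ :=
  (Quot.sound ⟨rfl, γ, 0, fun i => by simp [h]⟩).symm

variable [MulAction Γ V] (ho_smul : ∀ (γ : Γ) (e : E), o (γ • e) = γ • o e)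
  (ht_smul : ∀ (γ : Γ) (e : E), t (γ • e) = γ • t e)
  (hbar_smul : ∀ (γ : Γ) (e : E), bar (γ • e) = γ • bar e)
  (hstab : ∀ v : V, Finite (MulAction.stabilizer Γ v))
include ho_smul ht_smul hbar_smul hstab

/-- The translates of `p` by `H = Γ_{p 0}` are based prime paths of the class of `p`, each of
weight `r^|p| / |H|`, and there are `|H| / |Stab_H p|` of them. -/
theorem one_div_natCard_stabilizer_mul_pow_le_tsum_fiber {F : Set E} {r : ℝ} (hr0 : 0 ≤ r)
    (hW : Summable fun p : BasedPrimePath o t bar F => primePathWeight Γ r p.1)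
    {ξ : PrimeCycleQuot Γ o t bar} (p : BasedPrimePath o t bar F) (hp : Quot.mk _ p.1 = ξ) :
    1 / Nat.card (MulAction.stabilizer (MulAction.stabilizer Γ (p.1.1.2 0)) p.1.1.2) *
        r ^ p.1.1.1 ≤
      ∑' q : {q : BasedPrimePath o t bar F // Quot.mk _ q.1 = ξ}, primePathWeight Γ r q.1.1 := by
  obtain ⟨⟨⟨m, c⟩, hc⟩, hc0⟩ := p
  dsimp only at hc0 ⊢
  let H := MulAction.stabilizer Γ (c 0)
  have : Finite H := finite_stabilizer_of_origin ho_smul hstab _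
  have horbit : ∀ x ∈ MulAction.orbit H c, ∃ γ : Γ, x = γ • c ∧ x 0 = c 0 := by
    rintro _ ⟨h, rfl⟩
    exact ⟨h, rfl, h.2⟩
  let lift (x : MulAction.orbit H c) : {q : BasedPrimePath o t bar F // Quot.mk _ q.1 = ξ} :=
    ⟨⟨⟨(m, x), by
        obtain ⟨γ, hx, -⟩ := horbit _ x.2
        rw [hx]
        exact IsPrimePath.smul ho_smul ht_smul hbar_smul γ hc⟩,
      (horbit _ x.2).choose_spec.2 ▸ hc0⟩,
      .trans (primeCycleQuot_mk_eq_of_smul _ (horbit _ x.2).choose_spec.1) hp⟩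
  have hlift : Function.Injective lift := fun x y hxy =>
    Subtype.ext (congrArg (fun q => q.1.1.1.2) hxy)
  have hweight : ∀ x, primePathWeight Γ r (lift x).1.1 = 1 / Nat.card H * r ^ m :=
    fun x => by simp only [primePathWeight, lift, (horbit _ x.2).choose_spec.2, H]
  have : Finite (MulAction.orbit H c) := Set.finite_range _
  have : Nonempty (MulAction.orbit H c) := ⟨⟨c, MulAction.mem_orbit_self c⟩⟩
  have horbit_ne : (Nat.card (MulAction.orbit H c) : ℝ) ≠ 0 := by exact_mod_cast Nat.card_pos.ne'
  calc 1 / Nat.card (MulAction.stabilizer H c) * r ^ m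
      = Nat.card (MulAction.orbit H c) • (1 / Nat.card H * r ^ m) := by
        rw [← MulAction.natCard_stabilizer_mul_natCard_orbit (G := H) c, nsmul_eq_mul, Nat.cast_mul]
        field_simp
    _ = ∑' x, primePathWeight Γ r (lift x).1.1 := by rw [tsum_congr hweight, tsum_const]
    _ ≤ _ := tsum_comp_le_tsum_of_inj (hW.comp_injective Subtype.val_injective)
        (fun _ => primePathWeight_nonneg hr0 _) hlift

theorem one_div_primeStab_mul_pow_le_tsum_fiber {F : Set E}
    (hF : ∀ e : E, ∃ f ∈ F, ∃ γ : Γ, γ • e = f) {r : ℝ} (hr0 : 0 ≤ r)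
    (hW : Summable fun p : BasedPrimePath o t bar F => primePathWeight Γ r p.1)
    (ξ : PrimeCycleQuot Γ o t bar) :
    1 / (primeStab Γ o t bar ξ : ℝ) * r ^ primeLen Γ o t bar ξ ≤
      ∑' q : {q : BasedPrimePath o t bar F // Quot.mk _ q.1 = ξ}, primePathWeight Γ r q.1.1 := by
  rcases Nat.eq_zero_or_pos (primeStab Γ o t bar ξ) with hzero | hpos
  · rw [hzero, Nat.cast_zero, div_zero, zero_mul]
    exact tsum_nonneg fun _ => primePathWeight_nonneg hr0 _
  set p₀ := Quot.out ξ
  have : Finite (cycStab Γ p₀.1.2) := Nat.finite_of_card_ne_zero hpos.ne'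
  obtain ⟨_, hF₀, γ₀, rfl⟩ := hF (p₀.1.2 0)
  let p : BasedPrimePath o t bar F :=
    ⟨⟨(p₀.1.1, γ₀ • p₀.1.2), IsPrimePath.smul ho_smul ht_smul hbar_smul γ₀ p₀.2⟩, hF₀⟩
  have hp : Quot.mk _ p.1 = ξ := (primeCycleQuot_mk_eq_of_smul γ₀ rfl).trans (Quot.out_eq ξ)
  calc 1 / (Nat.card (cycStab Γ p₀.1.2) : ℝ) * r ^ p₀.1.1
      ≤ 1 / Nat.card (MulAction.stabilizer (MulAction.stabilizer Γ (p.1.1.2 0)) p.1.1.2) *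
          r ^ p.1.1.1 := by
        have : Finite (MulAction.stabilizer Γ (p.1.1.2 0)) :=
          finite_stabilizer_of_origin ho_smul hstab _
        gcongr
        · exact_mod_cast Nat.card_pos
        · exact natCard_stabilizer_smul_le_cycStab _ γ₀ p₀.1.2
    _ ≤ _ := one_div_natCard_stabilizer_mul_pow_le_tsum_fiber ho_smul ht_smul hbar_smul hstab
        hr0 hW p hp

theorem summable_one_div_primeStab_mul_pow (hfib : ∀ v, {e | o e = v}.Finite)
    (ho_bar : ∀ e, o (bar e) = t e) {d : ℕ} (hdeg : ∀ v, Nat.card {e // o e = v} ≤ d)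
    {F : Set E} (hF : ∀ e : E, ∃ f ∈ F, ∃ γ : Γ, γ • e = f)
    (hcovol : Summable fun e : F => (1 : ℝ) / Nat.card (MulAction.stabilizer Γ (e : E)))
    {r : ℝ} (hr0 : 0 ≤ r) (hr : r * ((d - 1 : ℕ) : ℝ) < 1) :
    Summable fun ξ : PrimeCycleQuot Γ o t bar =>
      1 / (primeStab Γ o t bar ξ : ℝ) * r ^ primeLen Γ o t bar ξ := by
  classical
  have hW := summable_basedPrimePath_weight hfib ho_bar hdeg hcovol hr0 hr
  exact summable_of_le_tsum_fiber hW (fun _ => by positivity)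
    (one_div_primeStab_mul_pow_le_tsum_fiber ho_smul ht_smul hbar_smul hstab hF hr0 hW)

end PrimePaths

section LogSeries

open Complex Filter

theorem norm_log_one_sub_le {z : ℂ} (hz : ‖z‖ < 1) : ‖log (1 - z)‖ ≤ (1 - ‖z‖)⁻¹ * ‖z‖ := by
  have h := norm_log_one_add_le (z := -z) (by rwa [norm_neg])
  rw [← sub_eq_add_neg, norm_neg] at h
  refine h.trans (le_of_sub_nonneg ?_)
  have hpos : 0 < 1 - ‖z‖ := by linarith
  have : (1 - ‖z‖)⁻¹ * ‖z‖ - (‖z‖ ^ 2 * (1 - ‖z‖)⁻¹ / 2 + ‖z‖) =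
      ‖z‖ ^ 2 * (1 - ‖z‖)⁻¹ / 2 := by
    field_simp
    ring
  rw [this]
  positivity

theorem norm_mul_log_one_sub_pow_le {a u : ℂ} {r : ℝ} {n : ℕ} (hu : ‖u‖ ≤ r) (hr : r < 1)
    (hn : 0 < n) : ‖a * log (1 - u ^ n)‖ ≤ (1 - r)⁻¹ * (‖a‖ * r ^ n) := by
  have hr0 : 0 ≤ r := (norm_nonneg u).trans hu
  have hun : ‖u ^ n‖ ≤ r ^ n := by rw [norm_pow]; gcongr
  have hrn : r ^ n ≤ r := pow_le_of_le_one hr0 hr.le hn.ne'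
  have hlog : ‖log (1 - u ^ n)‖ ≤ (1 - r)⁻¹ * r ^ n := calc
    ‖log (1 - u ^ n)‖ ≤ (1 - ‖u ^ n‖)⁻¹ * ‖u ^ n‖ := norm_log_one_sub_le (by linarith)
    _ ≤ (1 - r)⁻¹ * r ^ n := by
      have : 0 < 1 - r := by linarith
      gcongr
      linarith
  rw [norm_mul, mul_left_comm]
  gcongr

variable {ι : Type*} {a : ι → ℂ} {n : ι → ℕ} {R : ℝ}

theorem summable_norm_mul_log_one_sub_pow (hn : ∀ i, 0 < n i) {u : ℂ} (hu : ‖u‖ < 1)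
    (hsum : Summable fun i => ‖a i‖ * ‖u‖ ^ n i) :
    Summable fun i => ‖a i * log (1 - u ^ n i)‖ :=
  .of_nonneg_of_le (fun _ => norm_nonneg _)
    (fun i => norm_mul_log_one_sub_pow_le le_rfl hu (hn i)) (hsum.mul_left _)

theorem tendstoUniformlyOn_tsum_mul_log_one_sub_pow (hn : ∀ i, 0 < n i) (hR : R ≤ 1)
    (hsum : ∀ r, 0 ≤ r → r < R → Summable fun i => ‖a i‖ * r ^ n i)
    {K : Set ℂ} (hK : IsCompact K) (hKR : K ⊆ {u | ‖u‖ < R}) :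
    TendstoUniformlyOn (fun s : Finset ι => fun u => ∑ i ∈ s, a i * log (1 - u ^ n i))
      (fun u => ∑' i, a i * log (1 - u ^ n i)) atTop K := by
  rcases K.eq_empty_or_nonempty with rfl | hne
  · exact tendstoUniformlyOn_empty
  obtain ⟨u₀, hu₀, hmax⟩ := hK.exists_isMaxOn hne continuous_norm.continuousOn
  have hu₀R : ‖u₀‖ < R := hKR hu₀
  exact tendstoUniformlyOn_tsum ((hsum _ (norm_nonneg _) hu₀R).mul_left _)
    fun i u hu => norm_mul_log_one_sub_pow_le (hmax hu) (hu₀R.trans_le hR) (hn i)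

theorem differentiableOn_log_one_sub_pow {m : ℕ} (hm : 0 < m) :
    DifferentiableOn ℂ (fun u : ℂ => log (1 - u ^ m)) {u | ‖u‖ < 1} := by
  refine ((differentiable_pow m).differentiableOn.const_sub 1).clog fun u (hu : ‖u‖ < 1) => ?_
  rw [sub_eq_add_neg]
  refine mem_slitPlane_of_norm_lt_one ?_
  rw [norm_neg, norm_pow]
  exact pow_lt_one₀ (norm_nonneg u) hu hm.ne'

theorem differentiableOn_tsum_mul_log_one_sub_pow (hn : ∀ i, 0 < n i) (hR : R ≤ 1)
    (hsum : ∀ r, 0 ≤ r → r < R → Summable fun i => ‖a i‖ * r ^ n i) :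
    DifferentiableOn ℂ (fun u => ∑' i, a i * log (1 - u ^ n i)) {u | ‖u‖ < R} := by
  have hopen : IsOpen {u : ℂ | ‖u‖ < R} := isOpen_lt continuous_norm continuous_const
  refine TendstoLocallyUniformlyOn.differentiableOn
    ((tendstoLocallyUniformlyOn_iff_forall_isCompact hopen).2 fun K hKR hK =>
      tendstoUniformlyOn_tsum_mul_log_one_sub_pow hn hR hsum hK hKR)
    (Eventually.of_forall fun s => ?_) hopen
  exact .fun_sum fun i _ => ((differentiableOn_log_one_sub_pow (hn i)).mono
    fun u (hu : ‖u‖ < R) => hu.trans_le hR).const_mul _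

end LogSeries

theorem one_div_natCast_sub_one_le_one (d : ℕ) : 1 / ((d : ℝ) - 1) ≤ 1 := by
  rcases Nat.lt_or_ge d 2 with hd | hd
  · interval_cases d <;> norm_num
  · have hd' : (2 : ℝ) ≤ d := by exact_mod_cast hd
    rw [div_le_one (by linarith)]
    linarith

/-- For `d ≤ 1` the truncated subtraction `d - 1` is `0`. -/
theorem mul_natCast_sub_one_lt_one {d : ℕ} {r : ℝ} (hr : r < 1 / ((d : ℝ) - 1)) :
    r * ((d - 1 : ℕ) : ℝ) < 1 := by
  rcases Nat.lt_or_ge d 2 with hd | hd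
  · interval_cases d <;> norm_num
  · have hd' : (1 : ℝ) < d := by exact_mod_cast hd
    rwa [Nat.cast_sub (by omega), Nat.cast_one, ← lt_div_iff₀ (by linarith)]

theorem zeta_holomorphic_nonvanishing_general
    {V E Γ : Type*}
    [Group Γ] [MulAction Γ V] [MulAction Γ E]
    -- the graph in the sense of Serre, connected, with degrees bounded by d
    (o t : E → V) (bar : E → E)
    (ho_bar : ∀ e, o (bar e) = t e)
    (d : ℕ) (hfib : ∀ v, {e | o e = v}.Finite)
    (hdeg : ∀ v, Nat.card {e // o e = v} ≤ d)
    -- Γ acts by automorphisms of the graph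
    (ho_smul : ∀ (γ : Γ) (e : E), o (γ • e) = γ • o e)
    (ht_smul : ∀ (γ : Γ) (e : E), t (γ • e) = γ • t e)
    (hbar_smul : ∀ (γ : Γ) (e : E), bar (γ • e) = γ • bar e)
    -- discretely (finite vertex stabilizers)
    (hstab : ∀ v : V, Finite (MulAction.stabilizer Γ v))
    -- bounded covolume, w.r.t. a set 𝓕₁ of representatives of the Γ-orbits of edges
    (F1 : Set E) (hF1 : ∀ e : E, ∃! f, f ∈ F1 ∧ ∃ γ : Γ, γ • e = f)
    (hcovol : Summable fun e : F1 => (1 : ℝ) / Nat.card (MulAction.stabilizer Γ (e : E))) :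
    (∀ u : ℂ, ‖u‖ < 1 / ((d : ℝ) - 1) →
      Summable (fun ξ : PrimeCycleQuot Γ o t bar =>
        ‖(1 / (primeStab Γ o t bar ξ) : ℂ) *
          Complex.log (1 - u ^ (primeLen Γ o t bar ξ))‖)) ∧
    (∀ K : Set ℂ, IsCompact K → K ⊆ {u : ℂ | ‖u‖ < 1 / ((d : ℝ) - 1)} →
      TendstoUniformlyOn
        (fun (s : Finset (PrimeCycleQuot Γ o t bar)) u =>
          ∑ ξ ∈ s, (1 / (primeStab Γ o t bar ξ) : ℂ) *
            Complex.log (1 - u ^ (primeLen Γ o t bar ξ)))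
        (fun u => ∑' ξ : PrimeCycleQuot Γ o t bar,
          (1 / (primeStab Γ o t bar ξ) : ℂ) *
            Complex.log (1 - u ^ (primeLen Γ o t bar ξ)))
        Filter.atTop K) ∧
    DifferentiableOn ℂ (ZetaIhara Γ o t bar) {u : ℂ | ‖u‖ < 1 / ((d : ℝ) - 1)} ∧
    (∀ u : ℂ, ‖u‖ < 1 / ((d : ℝ) - 1) → ZetaIhara Γ o t bar u ≠ 0) := by
  have hR := one_div_natCast_sub_one_le_one d
  have hlen (ξ : PrimeCycleQuot Γ o t bar) : 0 < primeLen Γ o t bar ξ := (Quot.out ξ).2.1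
  have hsum (r : ℝ) (hr0 : 0 ≤ r) (hr : r < 1 / ((d : ℝ) - 1)) :
      Summable fun ξ => ‖(1 / (primeStab Γ o t bar ξ) : ℂ)‖ * r ^ primeLen Γ o t bar ξ := by
    simpa using summable_one_div_primeStab_mul_pow ho_smul ht_smul hbar_smul hstab hfib ho_bar
      hdeg (fun e => (hF1 e).exists) hcovol hr0 (mul_natCast_sub_one_lt_one hr)
  exact ⟨fun u hu => summable_norm_mul_log_one_sub_pow hlen (hu.trans_le hR)
      (hsum _ (norm_nonneg u) hu),
    fun K hK hKR => tendstoUniformlyOn_tsum_mul_log_one_sub_pow hlen hR hsum hK hKR,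
    (differentiableOn_tsum_mul_log_one_sub_pow hlen hR hsum).neg.cexp,
    fun u _ => Complex.exp_ne_zero _⟩

/-- Theorem 3.2 (i): the defining series of the Ihara zeta function converges absolutely
and uniformly on compact subsets of the disc `{|u| < 1/(d−1)}`, and `Z_{X,Γ}` is
holomorphic and nowhere vanishing there. -/
theorem zeta_holomorphic_nonvanishing
    {V E Γ : Type*} [Countable V] [Countable E]
    [Group Γ] [Countable Γ] [MulAction Γ V] [MulAction Γ E]
    -- the graph in the sense of Serre, connected, with degrees bounded by d
    (o t : E → V) (bar : E → E)
    (hbar_invol : ∀ e, bar (bar e) = e)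
    (hbar_ne : ∀ e, bar e ≠ e)
    (ho_bar : ∀ e, o (bar e) = t e)
    (hconn : ∀ u v : V, Relation.ReflTransGen (fun a b => ∃ e, o e = a ∧ t e = b) u v)
    (d : ℕ) (hfib : ∀ v, {e | o e = v}.Finite)
    (hdeg : ∀ v, Nat.card {e // o e = v} ≤ d)
    -- Γ acts by automorphisms of the graph
    (ho_smul : ∀ (γ : Γ) (e : E), o (γ • e) = γ • o e)
    (ht_smul : ∀ (γ : Γ) (e : E), t (γ • e) = γ • t e)
    (hbar_smul : ∀ (γ : Γ) (e : E), bar (γ • e) = γ • bar e)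
    -- without inversions
    (hnoinv : ∀ (γ : Γ) (e : E), γ • e ≠ bar e)
    -- discretely (finite vertex stabilizers)
    (hstab : ∀ v : V, Finite (MulAction.stabilizer Γ v))
    -- bounded covolume, w.r.t. a set 𝓕₁ of representatives of the Γ-orbits of edges
    (F1 : Set E) (hF1 : ∀ e : E, ∃! f, f ∈ F1 ∧ ∃ γ : Γ, γ • e = f)
    (hcovol : Summable fun e : F1 => (1 : ℝ) / Nat.card (MulAction.stabilizer Γ (e : E)))
    (hd2 : 2 ≤ d) :
    (∀ u : ℂ, ‖u‖ < 1 / ((d : ℝ) - 1) →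
      Summable (fun ξ : PrimeCycleQuot Γ o t bar =>
        ‖(1 / (primeStab Γ o t bar ξ) : ℂ) *
          Complex.log (1 - u ^ (primeLen Γ o t bar ξ))‖)) ∧
    (∀ K : Set ℂ, IsCompact K → K ⊆ {u : ℂ | ‖u‖ < 1 / ((d : ℝ) - 1)} →
      TendstoUniformlyOn
        (fun (s : Finset (PrimeCycleQuot Γ o t bar)) u =>
          ∑ ξ ∈ s, (1 / (primeStab Γ o t bar ξ) : ℂ) *
            Complex.log (1 - u ^ (primeLen Γ o t bar ξ)))
        (fun u => ∑' ξ : PrimeCycleQuot Γ o t bar,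
          (1 / (primeStab Γ o t bar ξ) : ℂ) *
            Complex.log (1 - u ^ (primeLen Γ o t bar ξ)))
        Filter.atTop K) ∧
    DifferentiableOn ℂ (ZetaIhara Γ o t bar) {u : ℂ | ‖u‖ < 1 / ((d : ℝ) - 1)} ∧
    (∀ u : ℂ, ‖u‖ < 1 / ((d : ℝ) - 1) → ZetaIhara Γ o t bar u ≠ 0) :=
  zeta_holomorphic_nonvanishing_general o t bar ho_bar d hfib hdeg ho_smul ht_smul hbar_smul hstab
    F1 hF1 hcovol
end
end

section
/- Let X be a (q+1)-regular graph (q≥1) on which Γ acts freely and with finite quotient B=X/Γ. For every real u with 0<|u|<1/q, both Δ(u) and Δ(1/(qu)) are positive invertible operators in the commutant N₀(X,Γ), Δ(1/(qu)) = (qu²)^{−1}·Δ(u), and det_Γ(Δ(1/(qu))) = (qu²)^{−|VB|} · det_Γ(Δ(u)). -/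
/-!
Writing `Δ(u) = (1 + qu²) - uA`, the scaling identity `Δ(1/(qu)) = (qu²)⁻¹ Δ(u)` is pure algebra.
The content is positivity: `A` is self-adjoint (reverse every edge) and `|⟪Af, f⟫| ≤ (q+1)‖f‖²`
(AM-GM on each edge, each vertex being the origin and the target of `q+1` edges), so
`re ⟪Δ(u) f, f⟫ ≥ (1 - |u|)(1 - q|u|)‖f‖²` is coercive for `|u| < 1/q`. Hence `Δ(u)` and its
positive multiple `Δ(1/(qu))` are strictly positive; `log` of a strictly positive operator turns the
scalar factor into the additive constant `log (qu²)⁻¹`, whose `Γ`-trace is `|VB| log (qu²)⁻¹`.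
-/

noncomputable section

instance lpOpRealCFC {V : Type*} :
    ContinuousFunctionalCalculus ℝ (lp (fun _ : V => ℂ) 2 →L[ℂ] lp (fun _ : V => ℂ) 2)
      IsSelfAdjoint :=
  IsSelfAdjoint.instContinuousFunctionalCalculus

open scoped lp ComplexConjugate ComplexOrder InnerProductSpace

def iharaDelta {R : Type*} [Ring R] [Algebra ℂ R] (q : ℕ) (u : ℝ) (a : R) : R :=
  ((1 + (q : ℝ) * u ^ 2 : ℝ) : ℂ) • 1 - ((u : ℝ) : ℂ) • a

lemma iharaDelta_one_div_mul {R : Type*} [Ring R] [Algebra ℂ R] {q : ℕ} {u : ℝ} (hq : q ≠ 0)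
    (hu : u ≠ 0) (a : R) :
    iharaDelta q (1 / (q * u)) a = (((q : ℝ) * u ^ 2 : ℝ) : ℂ)⁻¹ • iharaDelta q u a := by
  have hq' : (q : ℝ) ≠ 0 := Nat.cast_ne_zero.2 hq
  have hconst : (1 + q * (1 / (q * u)) ^ 2 : ℝ) = (q * u ^ 2)⁻¹ * (1 + q * u ^ 2) := by
    field_simp
    ring
  have hlin : (1 / (q * u) : ℝ) = (q * u ^ 2)⁻¹ * u := by
    field_simp
  rw [iharaDelta, iharaDelta, hconst, hlin]
  simp only [smul_sub, smul_smul, Complex.ofReal_mul, Complex.ofReal_inv]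

section HilbertSpace

variable {H : Type*} [NormedAddCommGroup H] [InnerProductSpace ℂ H]

lemma re_inner_smul_one_sub_smul_self (a u : ℝ) (A : H →L[ℂ] H) (x : H) :
    RCLike.re ⟪((a : ℂ) • (1 : H →L[ℂ] H) - (u : ℂ) • A) x, x⟫_ℂ
      = a * ‖x‖ ^ 2 - u * RCLike.re ⟪A x, x⟫_ℂ := by
  simp only [sub_apply, smul_apply, one_apply_eq_self, inner_sub_left, inner_smul_left,
    Complex.conj_ofReal, map_sub, inner_self_eq_norm_sq_to_K]
  simp [← Complex.ofReal_pow]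

lemma isStrictlyPositive_of_coercive [CompleteSpace H] {T : H →L[ℂ] H}
    (hT : IsSelfAdjoint T) {δ : ℝ} (hδ : 0 < δ) (h : ∀ x, δ * ‖x‖ ^ 2 ≤ RCLike.re ⟪T x, x⟫_ℂ) :
    IsStrictlyPositive T := by
  refine (isStrictlyPositive_algebraMap (A := H →L[ℂ] H) hδ).of_le ?_
  rw [ContinuousLinearMap.le_def, ContinuousLinearMap.isPositive_def']
  refine ⟨hT.sub (.algebraMap _ (.all δ)), fun x => ?_⟩
  have hδx : RCLike.re ⟪algebraMap ℝ (H →L[ℂ] H) δ x, x⟫_ℂ = δ * ‖x‖ ^ 2 := by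
    simpa using re_inner_smul_one_sub_smul_self δ 0 T x
  rw [ContinuousLinearMap.reApplyInnerSelf_apply, sub_apply, inner_sub_left, map_sub, hδx]
  linarith [h x]

lemma isStrictlyPositive_smul_one_sub_smul [CompleteSpace H] {A : H →L[ℂ] H}
    (hA : IsSelfAdjoint A) {d a u : ℝ} (hAd : ∀ x, ‖⟪A x, x⟫_ℂ‖ ≤ d * ‖x‖ ^ 2) (h : |u| * d < a) :
    IsStrictlyPositive ((a : ℂ) • (1 : H →L[ℂ] H) - (u : ℂ) • A) := by
  refine isStrictlyPositive_of_coercive ?_ (sub_pos.2 h) fun x => ?_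
  · exact (IsSelfAdjoint.smul (Complex.conj_ofReal a) (.one _)).sub
      (.smul (Complex.conj_ofReal u) hA)
  · rw [re_inner_smul_one_sub_smul_self]
    have : u * RCLike.re ⟪A x, x⟫_ℂ ≤ |u| * (d * ‖x‖ ^ 2) :=
      (le_abs_self _).trans <| by
        rw [abs_mul]
        exact mul_le_mul_of_nonneg_left ((RCLike.abs_re_le_norm _).trans (hAd x)) (abs_nonneg u)
    linarith

lemma isStrictlyPositive_iharaDelta [CompleteSpace H] {A : H →L[ℂ] H} (hA : IsSelfAdjoint A)
    {q : ℕ} (hAq : ∀ x, ‖⟪A x, x⟫_ℂ‖ ≤ (q + 1 : ℕ) * ‖x‖ ^ 2) (hq : 1 ≤ q) {u : ℝ}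
    (hu : q * |u| < 1) : IsStrictlyPositive (iharaDelta q u A) := by
  refine isStrictlyPositive_smul_one_sub_smul hA hAq ?_
  have hq' : (1 : ℝ) ≤ q := by exact_mod_cast hq
  have hu1 : |u| < 1 := by nlinarith [abs_nonneg u]
  push_cast
  nlinarith [sq_abs u, mul_pos (sub_pos.2 hu1) (sub_pos.2 hu)]

lemma IsStrictlyPositive.real_smul [CompleteSpace H] {T : H →L[ℂ] H} (hT : IsStrictlyPositive T)
    {r : ℝ} (hr : 0 < r) : IsStrictlyPositive (r • T) := by
  have hunit : IsUnit (r • T) := (isUnit_smul_iff (Units.mk0 r hr.ne') T).2 hT.isUnit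
  refine hunit.isStrictlyPositive ?_
  rw [ContinuousLinearMap.nonneg_iff_isPositive, ← Complex.coe_smul]
  exact ((ContinuousLinearMap.nonneg_iff_isPositive T).1 hT.nonneg).smul_of_nonneg
    (Complex.zero_le_real.2 hr.le)

end HilbertSpace

lemma lp.hasSum_norm_sq {ι : Type*} {E : ι → Type*} [∀ i, NormedAddCommGroup (E i)]
    (f : lp E 2) : HasSum (fun i => ‖f i‖ ^ 2) (‖f‖ ^ 2) := by
  simpa using lp.hasSum_norm (p := 2) (by norm_num) f

section Adjacency

variable {V E : Type*} {o t : E → V}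

lemma hasSum_comp_of_card_fiber [∀ v, Finite {e // o e = v}] {d : ℕ}
    (hreg : ∀ v, Nat.card {e // o e = v} = d) {h : V → ℝ} (h0 : 0 ≤ h) (hh : Summable h) :
    HasSum (fun e => h (o e)) (d * ∑' v, h v) := by
  have hfiber (v : V) : HasSum (fun e : {e // o e = v} => h (o e)) (d * h v) := by
    have := Fintype.ofFinite {e // o e = v}
    have hconst : (fun e : {e // o e = v} => h (o e)) = fun _ => h v :=
      funext fun e => congrArg h e.2
    simpa [hconst, ← hreg v, Nat.card_eq_fintype_card] using
      hasSum_fintype (fun _ : {e // o e = v} => h v)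
  have hsigma : Summable fun σ : Σ v, {e // o e = v} => h (o σ.2) :=
    (summable_sigma_of_nonneg fun _ => h0 _).2
      ⟨fun v => (hfiber v).summable, by simpa only [(hfiber _).tsum_eq] using hh.mul_left (d : ℝ)⟩
  exact (Equiv.sigmaFiberEquiv o).hasSum_iff.1 <|
    (hh.hasSum.mul_left (d : ℝ)).sigma_of_hasSum hfiber hsigma

lemma hasSum_norm_sq_comp_of_card_fiber [∀ v, Finite {e // o e = v}] {d : ℕ}
    (hreg : ∀ v, Nat.card {e // o e = v} = d) (f : ℓ²(V, ℂ)) :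
    HasSum (fun e => ‖f (o e)‖ ^ 2) (d * ‖f‖ ^ 2) := by
  simpa only [(lp.hasSum_norm_sq f).tsum_eq] using
    hasSum_comp_of_card_fiber hreg (fun _ => sq_nonneg _) (lp.hasSum_norm_sq f).summable

variable {bar : E → E}

lemma hasSum_norm_sq_comp_of_involutive [∀ v, Finite {e // o e = v}] {d : ℕ}
    (hbar : Function.Involutive bar) (ho_bar : ∀ e, o (bar e) = t e)
    (hreg : ∀ v, Nat.card {e // o e = v} = d) (f : ℓ²(V, ℂ)) :
    HasSum (fun e => ‖f (t e)‖ ^ 2) (d * ‖f‖ ^ 2) := by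
  simpa only [Function.comp_def, Function.Involutive.coe_toPerm, ho_bar] using
    (hbar.toPerm bar).hasSum_iff.2 (hasSum_norm_sq_comp_of_card_fiber hreg f)

lemma summable_conj_mul_comp [∀ v, Finite {e // o e = v}] {d : ℕ}
    (hbar : Function.Involutive bar) (ho_bar : ∀ e, o (bar e) = t e)
    (hreg : ∀ v, Nat.card {e // o e = v} = d) (f g : ℓ²(V, ℂ)) :
    Summable fun e => conj (f (o e)) * g (t e) := by
  refine .of_norm_bounded (((hasSum_norm_sq_comp_of_card_fiber hreg f).summable.add
    (hasSum_norm_sq_comp_of_involutive hbar ho_bar hreg g).summable).div_const 2) fun e => ?_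
  rw [norm_mul, RCLike.norm_conj]
  nlinarith [sq_nonneg (‖f (o e)‖ - ‖g (t e)‖)]

variable {A : ℓ²(V, ℂ) →L[ℂ] ℓ²(V, ℂ)}

lemma hasSum_inner_adjacency [∀ v, Finite {e // o e = v}] {d : ℕ}
    (hbar : Function.Involutive bar) (ho_bar : ∀ e, o (bar e) = t e)
    (hreg : ∀ v, Nat.card {e // o e = v} = d)
    (hA : ∀ f v, A f v = ∑' e : {e // o e = v}, f (t e)) (f g : ℓ²(V, ℂ)) :
    HasSum (fun e => conj (f (o e)) * g (t e)) ⟪f, A g⟫_ℂ := by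
  have hF := (summable_conj_mul_comp hbar ho_bar hreg f g).hasSum
  suffices h : ∑' e, conj (f (o e)) * g (t e) = ⟪f, A g⟫_ℂ by rwa [h] at hF
  refine (hF.tsum_fiberwise o).unique <| (lp.hasSum_inner f (A g)).congr_fun fun v => ?_
  rw [RCLike.inner_apply, hA, ← tsum_mul_right]
  exact tsum_congr fun e => by rw [(e.2 : o e = v), mul_comm]

lemma isSelfAdjoint_adjacency [∀ v, Finite {e // o e = v}] {d : ℕ}
    (hbar : Function.Involutive bar) (ho_bar : ∀ e, o (bar e) = t e)
    (hreg : ∀ v, Nat.card {e // o e = v} = d)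
    (hA : ∀ f v, A f v = ∑' e : {e // o e = v}, f (t e)) : IsSelfAdjoint A := by
  have ht_bar (e : E) : t (bar e) = o e := by rw [← ho_bar, hbar e]
  refine ContinuousLinearMap.isSelfAdjoint_iff_isSymmetric.2 fun f g => ?_
  change ⟪A f, g⟫_ℂ = ⟪f, A g⟫_ℂ
  rw [← inner_conj_symm]
  refine (Complex.hasSum_conj'.2 (hasSum_inner_adjacency hbar ho_bar hreg hA g f)).unique ?_
  have := (hbar.toPerm bar).hasSum_iff.2 (hasSum_inner_adjacency hbar ho_bar hreg hA f g)
  simpa only [Function.comp_def, Function.Involutive.coe_toPerm, ho_bar, ht_bar, map_mul,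
    Complex.conj_conj, mul_comm] using this

lemma norm_inner_adjacency_self_le [∀ v, Finite {e // o e = v}] {d : ℕ}
    (hbar : Function.Involutive bar) (ho_bar : ∀ e, o (bar e) = t e)
    (hreg : ∀ v, Nat.card {e // o e = v} = d)
    (hA : ∀ f v, A f v = ∑' e : {e // o e = v}, f (t e)) (f : ℓ²(V, ℂ)) :
    ‖⟪A f, f⟫_ℂ‖ ≤ d * ‖f‖ ^ 2 := by
  have hbound := ((hasSum_norm_sq_comp_of_card_fiber hreg f).add
    (hasSum_norm_sq_comp_of_involutive hbar ho_bar hreg f)).div_const 2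
  rw [add_self_div_two] at hbound
  rw [norm_inner_symm]
  refine (hasSum_inner_adjacency hbar ho_bar hreg hA f f).norm_le_of_bounded hbound fun e => ?_
  rw [norm_mul, RCLike.norm_conj]
  nlinarith [sq_nonneg (‖f (o e)‖ - ‖f (t e)‖)]

end Adjacency

section Graph

variable {V : Type*}

/-- Membership in the commutant `N₀(X,Γ)` of the translations `f ↦ f ∘ γ⁻¹`. -/
def CommutesWithAction (Γ : Type*) [Group Γ] [MulAction Γ V] (T : ℓ²(V, ℂ) →L[ℂ] ℓ²(V, ℂ)) :
    Prop :=
  ∀ (γ : Γ) (f f' : ℓ²(V, ℂ)), (∀ x, f' x = f (γ⁻¹ • x)) → ∀ x, T f' x = T f (γ⁻¹ • x)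

lemma commutesWithAction_adjacency {E Γ : Type*} [Group Γ] [MulAction Γ V] [MulAction Γ E]
    {o t : E → V} (ho_smul : ∀ (γ : Γ) e, o (γ • e) = γ • o e)
    (ht_smul : ∀ (γ : Γ) e, t (γ • e) = γ • t e) {A : ℓ²(V, ℂ) →L[ℂ] ℓ²(V, ℂ)}
    (hA : ∀ f v, A f v = ∑' e : {e // o e = v}, f (t e)) : CommutesWithAction Γ A := by
  intro γ f f' hf' x
  let translate : {e // o e = x} ≃ {e // o e = γ⁻¹ • x} :=
    (MulAction.toPerm γ⁻¹).subtypeEquiv fun e => by simp [ho_smul]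
  rw [hA, hA, ← translate.tsum_eq]
  exact tsum_congr fun e => by simp [translate, hf', ht_smul]

lemma CommutesWithAction.iharaDelta {Γ : Type*} [Group Γ] [MulAction Γ V]
    {A : ℓ²(V, ℂ) →L[ℂ] ℓ²(V, ℂ)} (hA : CommutesWithAction Γ A) (q : ℕ) (u : ℝ) :
    CommutesWithAction Γ (iharaDelta q u A) := by
  intro γ f f' hf' x
  simp only [_root_.iharaDelta, sub_apply, smul_apply, one_apply_eq_self, lp.coeFn_sub,
    lp.coeFn_smul, Pi.sub_apply, Pi.smul_apply, hf' x, hA γ f f' hf' x]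

variable [DecidableEq V]

/-- The trace `Tr_Γ`, summed over a set `F` of orbit representatives. -/
def traceΓ (F : Set V) (T : ℓ²(V, ℂ) →L[ℂ] ℓ²(V, ℂ)) : ℂ :=
  ∑' w : F, T (lp.single 2 (w : V) 1) (w : V)

def detΓ (F : Set V) (T : ℓ²(V, ℂ) →L[ℂ] ℓ²(V, ℂ)) : ℂ :=
  Complex.exp (traceΓ F (CFC.log T))

lemma traceΓ_algebraMap_add (F : Set V) [Finite F] (c : ℝ) (T : ℓ²(V, ℂ) →L[ℂ] ℓ²(V, ℂ)) :
    traceΓ F (algebraMap ℝ _ c + T) = Nat.card F * c + traceΓ F T := by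
  have := Fintype.ofFinite F
  simp only [traceΓ, tsum_fintype, add_apply, Algebra.algebraMap_eq_smul_one, smul_apply,
    one_apply_eq_self, lp.coeFn_add, Pi.add_apply, lp.coeFn_smul, Pi.smul_apply,
    lp.single_apply_self, Finset.sum_add_distrib, Finset.sum_const, Finset.card_univ,
    Nat.card_eq_fintype_card, nsmul_eq_mul, Complex.real_smul, mul_one]

lemma detΓ_smul (F : Set V) [Finite F] {r : ℝ} (hr : 0 < r) {T : ℓ²(V, ℂ) →L[ℂ] ℓ²(V, ℂ)}
    (hT : IsStrictlyPositive T) : detΓ F (r • T) = (r ^ Nat.card F : ℝ) * detΓ F T := by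
  have hlog : CFC.log (r • T) = algebraMap ℝ _ (Real.log r) + CFC.log T := CFC.log_smul' T hr hT
  rw [detΓ, detΓ, hlog, traceΓ_algebraMap_add, Complex.exp_add, Complex.exp_nat_mul,
    ← Complex.ofReal_exp, Real.exp_log hr, Complex.ofReal_pow]

end Graph

theorem delta_functional_equation_general
    {V E Γ : Type*} [DecidableEq V]
    [Group Γ] [MulAction Γ V] [MulAction Γ E]
    -- the graph in the sense of Serre, connected
    (o t : E → V) (bar : E → E)
    (hbar_invol : ∀ e, bar (bar e) = e)
    (ho_bar : ∀ e, o (bar e) = t e)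
    -- (q+1)-regular, q ≥ 1
    (q : ℕ) (hq : 1 ≤ q)
    (hreg : ∀ v, Nat.card {e // o e = v} = q + 1)
    -- Γ acts by automorphisms of the graph
    (ho_smul : ∀ (γ : Γ) (e : E), o (γ • e) = γ • o e)
    (ht_smul : ∀ (γ : Γ) (e : E), t (γ • e) = γ • t e)
    -- cofinitely: 𝓕₀ (vertices of B = X/Γ) is finite
    (F0 : Set V) (hF0fin : F0.Finite)
    -- the adjacency operator A on ℓ²(VX)
    (A : lp (fun _ : V => ℂ) 2 →L[ℂ] lp (fun _ : V => ℂ) 2)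
    (hA : ∀ (f : lp (fun _ : V => ℂ) 2) (v : V),
      A f v = ∑' e : {e : E // o e = v}, f (t (e : E))) :
    ∀ u : ℝ, 0 < |u| → |u| < 1 / (q : ℝ) →
      -- Δ(u) and Δ(1/(qu)) are positive and invertible
      (((1 + (q : ℝ) * u ^ 2 : ℝ) : ℂ) • (1 : lp (fun _ : V => ℂ) 2 →L[ℂ]
          lp (fun _ : V => ℂ) 2) - ((u : ℝ) : ℂ) • A).IsPositive ∧
      IsUnit (((1 + (q : ℝ) * u ^ 2 : ℝ) : ℂ) • (1 : lp (fun _ : V => ℂ) 2 →L[ℂ]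
          lp (fun _ : V => ℂ) 2) - ((u : ℝ) : ℂ) • A) ∧
      (((1 + (q : ℝ) * (1 / ((q : ℝ) * u)) ^ 2 : ℝ) : ℂ) •
          (1 : lp (fun _ : V => ℂ) 2 →L[ℂ] lp (fun _ : V => ℂ) 2) -
          ((1 / ((q : ℝ) * u) : ℝ) : ℂ) • A).IsPositive ∧
      IsUnit (((1 + (q : ℝ) * (1 / ((q : ℝ) * u)) ^ 2 : ℝ) : ℂ) •
          (1 : lp (fun _ : V => ℂ) 2 →L[ℂ] lp (fun _ : V => ℂ) 2) -
          ((1 / ((q : ℝ) * u) : ℝ) : ℂ) • A) ∧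
      -- they belong to the commutant N₀(X,Γ): they commute with the Γ-action
      (∀ (γ : Γ) (f f' : lp (fun _ : V => ℂ) 2), (∀ x, f' x = f (γ⁻¹ • x)) →
        ∀ x : V, ((((1 + (q : ℝ) * u ^ 2 : ℝ) : ℂ) • (1 : lp (fun _ : V => ℂ) 2 →L[ℂ]
            lp (fun _ : V => ℂ) 2) - ((u : ℝ) : ℂ) • A) f') x =
          ((((1 + (q : ℝ) * u ^ 2 : ℝ) : ℂ) • (1 : lp (fun _ : V => ℂ) 2 →L[ℂ]
            lp (fun _ : V => ℂ) 2) - ((u : ℝ) : ℂ) • A) f) (γ⁻¹ • x)) ∧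
      -- Δ(1/(qu)) = (qu²)⁻¹ · Δ(u)
      (((1 + (q : ℝ) * (1 / ((q : ℝ) * u)) ^ 2 : ℝ) : ℂ) •
          (1 : lp (fun _ : V => ℂ) 2 →L[ℂ] lp (fun _ : V => ℂ) 2) -
          ((1 / ((q : ℝ) * u) : ℝ) : ℂ) • A) =
        ((((q : ℝ) * u ^ 2 : ℝ) : ℂ))⁻¹ •
          (((1 + (q : ℝ) * u ^ 2 : ℝ) : ℂ) • (1 : lp (fun _ : V => ℂ) 2 →L[ℂ]
            lp (fun _ : V => ℂ) 2) - ((u : ℝ) : ℂ) • A) ∧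
      -- det_Γ(Δ(1/(qu))) = (qu²)^{−|VB|} det_Γ(Δ(u))
      Complex.exp (∑' w : F0,
          ((cfc Real.log (((1 + (q : ℝ) * (1 / ((q : ℝ) * u)) ^ 2 : ℝ) : ℂ) •
              (1 : lp (fun _ : V => ℂ) 2 →L[ℂ] lp (fun _ : V => ℂ) 2) -
              ((1 / ((q : ℝ) * u) : ℝ) : ℂ) • A))
            (lp.single 2 (w : V) 1)) (w : V)) =
        ((((q : ℝ) * u ^ 2) ^ (-(Nat.card F0 : ℤ)) : ℝ) : ℂ) *
          Complex.exp (∑' w : F0,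
            ((cfc Real.log (((1 + (q : ℝ) * u ^ 2 : ℝ) : ℂ) •
                (1 : lp (fun _ : V => ℂ) 2 →L[ℂ] lp (fun _ : V => ℂ) 2) -
                ((u : ℝ) : ℂ) • A))
              (lp.single 2 (w : V) 1)) (w : V)) := by
  intro u hu0 hu1
  have hqu : (q : ℝ) * |u| < 1 := by
    rwa [lt_div_iff₀ (by exact_mod_cast hq), mul_comm] at hu1
  have : ∀ v, Finite {e // o e = v} := fun v => Nat.finite_of_card_ne_zero (by simp [hreg])
  have hΔ : IsStrictlyPositive (iharaDelta q u A) :=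
    isStrictlyPositive_iharaDelta (isSelfAdjoint_adjacency hbar_invol ho_bar hreg hA)
      (norm_inner_adjacency_self_le hbar_invol ho_bar hreg hA) hq hqu
  have hu : u ≠ 0 := abs_pos.1 hu0
  have hr : 0 < (q : ℝ) * u ^ 2 := by positivity
  have hscale := iharaDelta_one_div_mul (Nat.one_le_iff_ne_zero.1 hq) hu A
  have hΔ' : iharaDelta q (1 / (q * u)) A = ((q : ℝ) * u ^ 2)⁻¹ • iharaDelta q u A := by
    rw [hscale, ← Complex.ofReal_inv]
    exact Complex.coe_smul _ _
  have hΔ'pos : IsStrictlyPositive (iharaDelta q (1 / (q * u)) A) :=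
    hΔ' ▸ hΔ.real_smul (inv_pos.2 hr)
  have : Finite F0 := hF0fin.to_subtype
  have hdet : detΓ F0 (iharaDelta q (1 / (q * u)) A)
      = (((q : ℝ) * u ^ 2) ^ (-(Nat.card F0 : ℤ)) : ℝ) * detΓ F0 (iharaDelta q u A) := by
    rw [hΔ', detΓ_smul F0 (inv_pos.2 hr) hΔ, zpow_neg, zpow_natCast, inv_pow]
  exact ⟨(ContinuousLinearMap.nonneg_iff_isPositive _).1 hΔ.nonneg, hΔ.isUnit,
    (ContinuousLinearMap.nonneg_iff_isPositive _).1 hΔ'pos.nonneg, hΔ'pos.isUnit,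
    (commutesWithAction_adjacency ho_smul ht_smul hA).iharaDelta q u, hscale, hdet⟩

/-- Lemma 6.1 (iv): for a `(q+1)`-regular graph with a free cofinite action, and real
`u` with `0<|u|<1/q`, the operators `Δ(u)` and `Δ(1/(qu))` are positive invertible
elements of the commutant `N₀(X,Γ)`, `Δ(1/(qu)) = (qu²)^{−1} Δ(u)`, and
`det_Γ(Δ(1/(qu))) = (qu²)^{−|VB|} det_Γ(Δ(u))`. -/
theorem delta_functional_equation
    {V E Γ : Type*} [Countable V] [Countable E] [DecidableEq V]
    [Group Γ] [Countable Γ] [MulAction Γ V] [MulAction Γ E]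
    -- the graph in the sense of Serre, connected
    (o t : E → V) (bar : E → E)
    (hbar_invol : ∀ e, bar (bar e) = e)
    (hbar_ne : ∀ e, bar e ≠ e)
    (ho_bar : ∀ e, o (bar e) = t e)
    (hconn : ∀ u v : V, Relation.ReflTransGen (fun a b => ∃ e, o e = a ∧ t e = b) u v)
    -- (q+1)-regular, q ≥ 1
    (q : ℕ) (hq : 1 ≤ q) (hfib : ∀ v, {e | o e = v}.Finite)
    (hreg : ∀ v, Nat.card {e // o e = v} = q + 1)
    -- Γ acts by automorphisms of the graph
    (ho_smul : ∀ (γ : Γ) (e : E), o (γ • e) = γ • o e)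
    (ht_smul : ∀ (γ : Γ) (e : E), t (γ • e) = γ • t e)
    (hbar_smul : ∀ (γ : Γ) (e : E), bar (γ • e) = γ • bar e)
    -- without inversions
    (hnoinv : ∀ (γ : Γ) (e : E), γ • e ≠ bar e)
    -- freely
    (hfree : ∀ (γ : Γ) (v : V), γ • v = v → γ = 1)
    (hfreeE : ∀ (γ : Γ) (e : E), γ • e = e → γ = 1)
    -- cofinitely: 𝓕₀ (vertices of B = X/Γ) is finite
    (F0 : Set V) (hF0 : ∀ v : V, ∃! w, w ∈ F0 ∧ ∃ γ : Γ, γ • v = w) (hF0fin : F0.Finite)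
    -- the adjacency operator A on ℓ²(VX)
    (A : lp (fun _ : V => ℂ) 2 →L[ℂ] lp (fun _ : V => ℂ) 2)
    (hA : ∀ (f : lp (fun _ : V => ℂ) 2) (v : V),
      A f v = ∑' e : {e : E // o e = v}, f (t (e : E))) :
    ∀ u : ℝ, 0 < |u| → |u| < 1 / (q : ℝ) →
      -- Δ(u) and Δ(1/(qu)) are positive and invertible
      (((1 + (q : ℝ) * u ^ 2 : ℝ) : ℂ) • (1 : lp (fun _ : V => ℂ) 2 →L[ℂ]
          lp (fun _ : V => ℂ) 2) - ((u : ℝ) : ℂ) • A).IsPositive ∧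
      IsUnit (((1 + (q : ℝ) * u ^ 2 : ℝ) : ℂ) • (1 : lp (fun _ : V => ℂ) 2 →L[ℂ]
          lp (fun _ : V => ℂ) 2) - ((u : ℝ) : ℂ) • A) ∧
      (((1 + (q : ℝ) * (1 / ((q : ℝ) * u)) ^ 2 : ℝ) : ℂ) •
          (1 : lp (fun _ : V => ℂ) 2 →L[ℂ] lp (fun _ : V => ℂ) 2) -
          ((1 / ((q : ℝ) * u) : ℝ) : ℂ) • A).IsPositive ∧
      IsUnit (((1 + (q : ℝ) * (1 / ((q : ℝ) * u)) ^ 2 : ℝ) : ℂ) •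
          (1 : lp (fun _ : V => ℂ) 2 →L[ℂ] lp (fun _ : V => ℂ) 2) -
          ((1 / ((q : ℝ) * u) : ℝ) : ℂ) • A) ∧
      -- they belong to the commutant N₀(X,Γ): they commute with the Γ-action
      (∀ (γ : Γ) (f f' : lp (fun _ : V => ℂ) 2), (∀ x, f' x = f (γ⁻¹ • x)) →
        ∀ x : V, ((((1 + (q : ℝ) * u ^ 2 : ℝ) : ℂ) • (1 : lp (fun _ : V => ℂ) 2 →L[ℂ]
            lp (fun _ : V => ℂ) 2) - ((u : ℝ) : ℂ) • A) f') x =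
          ((((1 + (q : ℝ) * u ^ 2 : ℝ) : ℂ) • (1 : lp (fun _ : V => ℂ) 2 →L[ℂ]
            lp (fun _ : V => ℂ) 2) - ((u : ℝ) : ℂ) • A) f) (γ⁻¹ • x)) ∧
      -- Δ(1/(qu)) = (qu²)⁻¹ · Δ(u)
      (((1 + (q : ℝ) * (1 / ((q : ℝ) * u)) ^ 2 : ℝ) : ℂ) •
          (1 : lp (fun _ : V => ℂ) 2 →L[ℂ] lp (fun _ : V => ℂ) 2) -
          ((1 / ((q : ℝ) * u) : ℝ) : ℂ) • A) =
        ((((q : ℝ) * u ^ 2 : ℝ) : ℂ))⁻¹ •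
          (((1 + (q : ℝ) * u ^ 2 : ℝ) : ℂ) • (1 : lp (fun _ : V => ℂ) 2 →L[ℂ]
            lp (fun _ : V => ℂ) 2) - ((u : ℝ) : ℂ) • A) ∧
      -- det_Γ(Δ(1/(qu))) = (qu²)^{−|VB|} det_Γ(Δ(u))
      Complex.exp (∑' w : F0,
          ((cfc Real.log (((1 + (q : ℝ) * (1 / ((q : ℝ) * u)) ^ 2 : ℝ) : ℂ) •
              (1 : lp (fun _ : V => ℂ) 2 →L[ℂ] lp (fun _ : V => ℂ) 2) -
              ((1 / ((q : ℝ) * u) : ℝ) : ℂ) • A))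
            (lp.single 2 (w : V) 1)) (w : V)) =
        ((((q : ℝ) * u ^ 2) ^ (-(Nat.card F0 : ℤ)) : ℝ) : ℂ) *
          Complex.exp (∑' w : F0,
            ((cfc Real.log (((1 + (q : ℝ) * u ^ 2 : ℝ) : ℂ) •
                (1 : lp (fun _ : V => ℂ) 2 →L[ℂ] lp (fun _ : V => ℂ) 2) -
                ((u : ℝ) : ℂ) • A))
              (lp.single 2 (w : V) 1)) (w : V)) :=
  delta_functional_equation_general o t bar hbar_invol ho_bar q hq hreg ho_smul ht_smul F0 hF0fin A
    hA
end
end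

section
/- Let X be a connected, countably infinite graph with bounded degree, let Γ be a countable group acting on X freely and cofinitely, and let F be a finite connected fundamental domain. If Γ admits a Følner sequence (i.e., for every finite subset A⊂Γ and every ε>0 there exists a nonempty finite E⊂Γ with |E·A ∖ E| < ε·|E|), then X admits an amenable exhaustion: there exist finite subsets Eₙ⊂Γ such that the subgraphs Kₙ := ∪_{γ∈Eₙ} γF satisfy Kₙ⊂Kₙ₊₁ for all n, ∪ₙKₙ = X, and |𝓕Kₙ|/|VKₙ| → 0 as n→∞, where 𝓕Kₙ := {v∈VKₙ : dist(v, VX∖VKₙ) = 1} (graph distance). In particular, X is an amenable graph. -/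
/-!
Let `S ⊆ Γ` be the finite set of `s` such that some edge joins `F` to `s • F` (finite because
the action is free and `X` is locally finite). If `v = γ • u` with `γ ∈ A`, `u ∈ F`, is a
boundary vertex of `K = A • F` with neighbour `w = β⁻¹ • u'`, `u' ∈ F`, then `γ⁻¹ β⁻¹ ∈ S` and
`β⁻¹ ∉ A`, so `w` lies in a tile `δ • F` with `δ ∈ A * S \ A`. Hence
`|∂K| ≤ |A * S \ A| · |F| · d`, while `|K| ≥ |A|` by freeness, and Følner sets for `S` give
boundary ratios tending to `0`. As `Γ` is infinite (the infinite `X` is covered by translates of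
the finite `F`), Følner sets can be taken as large as we like, so that adding a prescribed finite
set costs little; this makes them nested and exhausting.
-/

open scoped Pointwise

noncomputable section

def HasFolnerSets (Γ : Type*) [Group Γ] [DecidableEq Γ] : Prop :=
  ∀ (S : Finset Γ) (ε : ℝ), 0 < ε →
    ∃ E : Finset Γ, E.Nonempty ∧ (((E * S) \ E).card : ℝ) < ε * E.card

namespace HasFolnerSets

variable {Γ : Type*} [Group Γ] [DecidableEq Γ]

/-- A Følner set `E` for `S ∪ T` with `ε ≤ 1` satisfies `#T ≤ #(E * T) < 2 #E`. -/
theorem exists_le_card [Infinite Γ] (h : HasFolnerSets Γ) (S : Finset Γ) {ε : ℝ} (hε : 0 < ε)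
    (N : ℕ) :
    ∃ E : Finset Γ, E.Nonempty ∧ (((E * S) \ E).card : ℝ) < ε * E.card ∧ N ≤ E.card := by
  obtain ⟨T, hT⟩ := Infinite.exists_subset_card_eq Γ (2 * N)
  obtain ⟨E, hne, hE⟩ := h (S ∪ T) (min ε 1) (lt_min hε one_pos)
  have hE' : (((E * (S ∪ T)) \ E).card : ℝ) < E.card :=
    hE.trans_le (mul_le_of_le_one_left (Nat.cast_nonneg _) (min_le_right _ _))
  refine ⟨E, hne, ?_, ?_⟩
  · calc (((E * S) \ E).card : ℝ)
        ≤ ((E * (S ∪ T)) \ E).card := by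
          exact_mod_cast Finset.card_le_card
            (Finset.sdiff_subset_sdiff (Finset.mul_subset_mul_left Finset.subset_union_left) le_rfl)
      _ < min ε 1 * E.card := hE
      _ ≤ ε * E.card := by gcongr; exact min_le_left _ _
  · have : (2 * N : ℝ) < 2 * E.card := by
      calc (2 * N : ℝ) = T.card := by rw [hT]; push_cast; ring
        _ ≤ (E * (S ∪ T)).card := by
          exact_mod_cast (Finset.card_le_card_mul_left hne).trans
            (Finset.card_le_card (Finset.mul_subset_mul_left Finset.subset_union_right))
        _ ≤ ((E * (S ∪ T)) \ E).card + E.card := by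
          exact_mod_cast Finset.card_le_card_sdiff_add_card
        _ < 2 * E.card := by linarith
    exact_mod_cast (lt_of_mul_lt_mul_left this zero_le_two).le

theorem exists_superset [Infinite Γ] (h : HasFolnerSets Γ) (S T : Finset Γ) {ε : ℝ}
    (hε : 0 < ε) :
    ∃ E : Finset Γ, T ⊆ E ∧ E.Nonempty ∧ (((E * S) \ E).card : ℝ) < ε * E.card := by
  obtain ⟨N, hN⟩ := exists_nat_gt ((T * S).card / (ε / 2))
  obtain ⟨E, hne, hE, hNE⟩ := h.exists_le_card S (half_pos hε) N
  have hTS : ((T * S).card : ℝ) < ε / 2 * E.card := by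
    rw [div_lt_iff₀ (half_pos hε)] at hN
    nlinarith [(Nat.cast_le (α := ℝ)).2 hNE]
  refine ⟨E ∪ T, Finset.subset_union_right, hne.mono Finset.subset_union_left, ?_⟩
  have hsub : ((E ∪ T) * S) \ (E ∪ T) ⊆ ((E * S) \ E) ∪ T * S := by
    intro x
    simp only [Finset.union_mul, Finset.mem_sdiff, Finset.mem_union]
    tauto
  calc ((((E ∪ T) * S) \ (E ∪ T)).card : ℝ)
      ≤ ((E * S) \ E).card + (T * S).card := by
        exact_mod_cast (Finset.card_le_card hsub).trans (Finset.card_union_le _ _)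
    _ < ε / 2 * E.card + ε / 2 * E.card := add_lt_add hE hTS
    _ = ε * E.card := by ring
    _ ≤ ε * (E ∪ T).card := by
        gcongr
        exact Finset.subset_union_left

/-- Enumerating `Γ` as `g 0, g 1, …`, the `n`-th set is a `1/(n+1)`-Følner superset of
the previous one together with `g n`. -/
theorem exists_exhaustion [Countable Γ] [Infinite Γ] (h : HasFolnerSets Γ) (S : Finset Γ) :
    ∃ Es : ℕ → Finset Γ, (∀ n, Es n ⊆ Es (n + 1)) ∧ (∀ γ, ∃ n, γ ∈ Es n) ∧
      ∀ n, (Es n).Nonempty ∧ (((Es n * S) \ Es n).card : ℝ) < 1 / (n + 1) * (Es n).card := by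
  choose F hTF hne hF using fun (T : Finset Γ) (n : ℕ) =>
    h.exists_superset S T (ε := 1 / (n + 1)) Nat.one_div_pos_of_nat
  obtain ⟨g, hg⟩ := exists_surjective_nat Γ
  let P : ℕ → Finset Γ := fun n => Nat.rec ∅ (fun m prev => F (insert (g m) prev) m) n
  have hP : ∀ n, P (n + 1) = F (insert (g n) (P n)) n := fun n => rfl
  refine ⟨fun n => P (n + 1), fun n => ?_, fun γ => ?_, fun n => ⟨hne _ _, hF _ _⟩⟩
  · change P (n + 1) ⊆ P (n + 1 + 1)
    rw [hP (n + 1)]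
    exact (Finset.subset_insert _ _).trans (hTF _ _)
  · obtain ⟨n, rfl⟩ := hg γ
    exact ⟨n, show g n ∈ P (n + 1) from (hP n).symm ▸ hTF _ _ (Finset.mem_insert_self _ _)⟩

end HasFolnerSets

section FreeAction

variable {Γ X : Type*} [Group Γ] [MulAction Γ X]

theorem smul_left_injective_of_free (hfree : ∀ (γ : Γ) (x : X), γ • x = x → γ = 1) (x : X) :
    Function.Injective (fun γ : Γ => γ • x) := fun γ β h =>
  (inv_mul_eq_one.1 (hfree (β⁻¹ * γ) x (by simp only [mul_smul, h, inv_smul_smul]))).symm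

theorem finite_setOf_exists_smul_mem (hfree : ∀ (γ : Γ) (x : X), γ • x = x → γ = 1)
    {A B : Set X} (hA : A.Finite) (hB : B.Finite) :
    {γ : Γ | ∃ a ∈ A, γ • a ∈ B}.Finite := by
  refine (hA.biUnion fun a _ => hB.biUnion fun b _ =>
    (Set.finite_singleton b).preimage (smul_left_injective_of_free hfree a).injOn).subset ?_
  rintro γ ⟨a, ha, hb⟩
  exact Set.mem_biUnion ha (Set.mem_biUnion hb rfl)

theorem card_le_ncard_smul_set (hfree : ∀ (γ : Γ) (x : X), γ • x = x → γ = 1) {F : Set X}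
    (hF : F.Finite) (hFne : F.Nonempty) (A : Finset Γ) :
    A.card ≤ ((A : Set Γ) • F).ncard := by
  obtain ⟨u, hu⟩ := hFne
  rw [← Set.ncard_coe_finset]
  exact Set.ncard_le_ncard_of_injOn _ (fun γ hγ => Set.smul_mem_smul hγ hu)
    (smul_left_injective_of_free hfree u).injOn (A.finite_toSet.smul hF)

theorem infinite_of_forall_exists_smul_mem [Infinite X] {F : Set X} (hF : F.Finite)
    (hcover : ∀ x, ∃ γ : Γ, γ • x ∈ F) : Infinite Γ := by
  by_contra hΓ
  have : Finite Γ := not_infinite_iff_finite.1 hΓ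
  refine Set.infinite_univ (α := X)
    ((Set.finite_iUnion fun γ : Γ => hF.smul_set (a := γ⁻¹)).subset fun x _ => ?_)
  obtain ⟨γ, hγ⟩ := hcover x
  exact Set.mem_iUnion.2 ⟨γ, Set.mem_inv_smul_set_iff.2 hγ⟩

theorem iUnion_biUnion_smul_eq_univ {F : Set X} (hcover : ∀ x, ∃ γ : Γ, γ • x ∈ F)
    {Es : ℕ → Finset Γ} (hEs : ∀ γ, ∃ n, γ ∈ Es n) :
    (⋃ n, ⋃ γ ∈ (Es n : Set Γ), (fun x => γ • x) '' F) = Set.univ := by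
  refine Set.eq_univ_of_forall fun x => ?_
  obtain ⟨γ, hγ⟩ := hcover x
  obtain ⟨n, hn⟩ := hEs γ⁻¹
  exact Set.mem_iUnion.2 ⟨n, Set.mem_biUnion hn ⟨γ • x, hγ, inv_smul_smul γ x⟩⟩

end FreeAction

section SerreGraph

variable {V E Γ : Type*} [Group Γ] [MulAction Γ V] {o t : E → V}

def vertexBoundary (o t : E → V) (K : Set V) : Set V :=
  {v | v ∈ K ∧ ∃ e, o e = v ∧ t e ∉ K}

theorem exists_edge_of_reflTransGen [Nontrivial V]
    (hconn : ∀ u v : V, Relation.ReflTransGen (fun a b => ∃ e, o e = a ∧ t e = b) u v)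
    (v : V) : ∃ e, o e = v := by
  obtain ⟨u, hu⟩ := exists_ne v
  rcases (hconn v u).cases_head with h | ⟨_, ⟨e, he, _⟩, _⟩
  · exact absurd h.symm hu
  · exact ⟨e, he⟩

theorem finite_setOf_exists_edge_smul (hfree : ∀ (γ : Γ) (v : V), γ • v = v → γ = 1)
    (hfib : ∀ v, {e | o e = v}.Finite) {F : Set V} (hF : F.Finite) :
    {s : Γ | ∃ e, o e ∈ F ∧ t e ∈ s • F}.Finite := by
  refine (finite_setOf_exists_smul_mem hfree hF
    ((hF.preimage' fun v _ => hfib v).image t)).subset ?_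
  rintro s ⟨e, he, u, hu, hsu⟩
  exact ⟨u, hu, e, he, hsu.symm⟩

variable [MulAction Γ E]

theorem exists_smul_mem_union_image {bar : E → E} (hbar_invol : ∀ e, bar (bar e) = e)
    (hbar_smul : ∀ (γ : Γ) (e : E), bar (γ • e) = γ • bar e) {EF : Set E}
    (hEF : ∀ e : E, ∃ f ∈ EF, ∃ γ : Γ, γ • e = f ∨ γ • bar e = f) (e : E) :
    ∃ γ : Γ, γ • e ∈ EF ∪ bar '' EF := by
  obtain ⟨f, hf, γ, rfl | rfl⟩ := hEF e
  · exact ⟨γ, Or.inl hf⟩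
  · exact ⟨γ, Or.inr ⟨_, hf, by rw [hbar_smul, hbar_invol]⟩⟩

theorem exists_smul_mem_image (ho_smul : ∀ (γ : Γ) (e : E), o (γ • e) = γ • o e) {D : Set E}
    (hcover : ∀ e, ∃ γ : Γ, γ • e ∈ D) {v : V} (hv : ∃ e, o e = v) :
    ∃ γ : Γ, γ • v ∈ o '' D := by
  obtain ⟨e, rfl⟩ := hv
  obtain ⟨γ, hγ⟩ := hcover e
  exact ⟨γ, _, hγ, ho_smul γ e⟩

theorem vertexBoundary_smul_subset [DecidableEq Γ] {bar : E → E}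
    (ho_smul : ∀ (γ : Γ) (e : E), o (γ • e) = γ • o e)
    (ht_smul : ∀ (γ : Γ) (e : E), t (γ • e) = γ • t e)
    (hbar_invol : ∀ e, bar (bar e) = e) (ho_bar : ∀ e, o (bar e) = t e) {F : Set V}
    (hcover : ∀ v, ∃ β : Γ, β • v ∈ F) {S : Finset Γ}
    (hS : ∀ e (s : Γ), o e ∈ F → t e ∈ s • F → s ∈ S) (A : Finset Γ) :
    vertexBoundary o t ((A : Set Γ) • F) ⊆
      ⋃ δ ∈ (A * S) \ A, ⋃ u ∈ F, t '' {e | o e = δ • u} := by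
  rintro _ ⟨⟨γ, hγ, u, hu, rfl⟩, e, he, hte⟩
  obtain ⟨β, hβ⟩ := hcover (t e)
  have hs : γ⁻¹ * β⁻¹ ∈ S := hS (γ⁻¹ • e) _ (by rw [ho_smul, he, inv_smul_smul]; exact hu)
    ⟨β • t e, hβ, by simp only [ht_smul, mul_smul, inv_smul_smul]⟩
  have hβA : β⁻¹ ∉ A := fun h => hte ⟨β⁻¹, h, β • t e, hβ, inv_smul_smul β (t e)⟩
  refine Set.mem_biUnion (x := β⁻¹) (Finset.mem_sdiff.2 ⟨?_, hβA⟩)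
    (Set.mem_biUnion hβ ⟨bar e, ?_, ?_⟩)
  · simpa using Finset.mul_mem_mul hγ hs
  · rw [Set.mem_ofPred_eq, ho_bar, inv_smul_smul]
  · rw [← ho_bar, hbar_invol, he]

theorem ncard_vertexBoundary_smul_le [DecidableEq Γ] {bar : E → E}
    (ho_smul : ∀ (γ : Γ) (e : E), o (γ • e) = γ • o e)
    (ht_smul : ∀ (γ : Γ) (e : E), t (γ • e) = γ • t e)
    (hbar_invol : ∀ e, bar (bar e) = e) (ho_bar : ∀ e, o (bar e) = t e)
    (hfib : ∀ v, {e | o e = v}.Finite) {d : ℕ} (hdeg : ∀ v, Nat.card {e // o e = v} ≤ d)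
    {F : Set V} (hF : F.Finite) (hcover : ∀ v, ∃ β : Γ, β • v ∈ F) {S : Finset Γ}
    (hS : ∀ e (s : Γ), o e ∈ F → t e ∈ s • F → s ∈ S) (A : Finset Γ) :
    (vertexBoundary o t ((A : Set Γ) • F)).ncard ≤ ((A * S) \ A).card * F.ncard * d := by
  have hnbr : ∀ w, (t '' {e | o e = w}).ncard ≤ d := fun w =>
    (Set.ncard_image_le (hfib w)).trans (hdeg w)
  calc (vertexBoundary o t ((A : Set Γ) • F)).ncard
      ≤ (⋃ δ ∈ (A * S) \ A, ⋃ u ∈ hF.toFinset, t '' {e | o e = δ • u}).ncard := by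
        refine Set.ncard_le_ncard ?_ (Set.Finite.biUnion (Finset.finite_toSet _) fun δ _ =>
          Set.Finite.biUnion (Finset.finite_toSet _) fun u _ => (hfib _).image t)
        simpa using vertexBoundary_smul_subset ho_smul ht_smul hbar_invol ho_bar hcover hS A
    _ ≤ ∑ δ ∈ (A * S) \ A, ∑ u ∈ hF.toFinset, (t '' {e | o e = δ • u}).ncard :=
        (Finset.set_ncard_biUnion_le _ _).trans
          (Finset.sum_le_sum fun δ _ => Finset.set_ncard_biUnion_le _ _)
    _ ≤ ∑ δ ∈ (A * S) \ A, ∑ u ∈ hF.toFinset, d := by gcongr; exact hnbr _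
    _ = ((A * S) \ A).card * F.ncard * d := by
        simp [Set.ncard_eq_toFinset_card F hF, mul_assoc]

theorem ncard_vertexBoundary_smul_div_le [DecidableEq Γ] {bar : E → E}
    (ho_smul : ∀ (γ : Γ) (e : E), o (γ • e) = γ • o e)
    (ht_smul : ∀ (γ : Γ) (e : E), t (γ • e) = γ • t e)
    (hbar_invol : ∀ e, bar (bar e) = e) (ho_bar : ∀ e, o (bar e) = t e)
    (hfree : ∀ (γ : Γ) (v : V), γ • v = v → γ = 1)
    (hfib : ∀ v, {e | o e = v}.Finite) {d : ℕ} (hdeg : ∀ v, Nat.card {e // o e = v} ≤ d)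
    {F : Set V} (hF : F.Finite) (hFne : F.Nonempty) (hcover : ∀ v, ∃ β : Γ, β • v ∈ F)
    {S : Finset Γ} (hS : ∀ e (s : Γ), o e ∈ F → t e ∈ s • F → s ∈ S) {A : Finset Γ}
    (hA : A.Nonempty) :
    ((vertexBoundary o t ((A : Set Γ) • F)).ncard : ℝ) / ((A : Set Γ) • F).ncard ≤
      F.ncard * d * (((A * S) \ A).card / A.card) := by
  have hA₀ : (0 : ℝ) < A.card := by exact_mod_cast hA.card_pos
  have hAK : (A.card : ℝ) ≤ ((A : Set Γ) • F).ncard := by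
    exact_mod_cast card_le_ncard_smul_set hfree hF hFne A
  rw [div_le_iff₀ (hA₀.trans_le hAK)]
  calc ((vertexBoundary o t ((A : Set Γ) • F)).ncard : ℝ)
      ≤ ((A * S) \ A).card * F.ncard * d := by
        exact_mod_cast ncard_vertexBoundary_smul_le ho_smul ht_smul hbar_invol ho_bar hfib hdeg
          hF hcover hS A
    _ = F.ncard * d * (((A * S) \ A).card / A.card) * A.card := by field_simp
    _ ≤ F.ncard * d * (((A * S) \ A).card / A.card) * ((A : Set Γ) • F).ncard := by gcongr

end SerreGraph

theorem amenable_exhaustion_exists_general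
    {V E Γ : Type*} [Infinite V]
    [Group Γ] [Countable Γ] [DecidableEq Γ] [MulAction Γ V] [MulAction Γ E]
    -- the graph in the sense of Serre, connected, countably infinite, bounded degree
    (o t : E → V) (bar : E → E)
    (hbar_invol : ∀ e, bar (bar e) = e)
    (ho_bar : ∀ e, o (bar e) = t e)
    (hconn : ∀ u v : V, Relation.ReflTransGen (fun a b => ∃ e, o e = a ∧ t e = b) u v)
    (d : ℕ) (hfib : ∀ v, {e | o e = v}.Finite)
    (hdeg : ∀ v, Nat.card {e // o e = v} ≤ d)
    -- Γ acts by automorphisms of the graph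
    (ho_smul : ∀ (γ : Γ) (e : E), o (γ • e) = γ • o e)
    (ht_smul : ∀ (γ : Γ) (e : E), t (γ • e) = γ • t e)
    (hbar_smul : ∀ (γ : Γ) (e : E), bar (γ • e) = γ • bar e)
    -- freely
    (hfree : ∀ (γ : Γ) (v : V), γ • v = v → γ = 1)
    -- with finite connected fundamental domain F = (VF, EF): EF contains exactly one
    -- representative of each Γ-orbit of geometric edges {e, ē} (cofiniteness)
    (EF : Set E) (hEFfin : EF.Finite)
    (hEF : ∀ e : E, ∃! f, f ∈ EF ∧ ∃ γ : Γ, γ • e = f ∨ γ • bar e = f)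
    (VF : Set V) (hVF : VF = o '' EF ∪ t '' EF)
    -- Γ admits a Følner sequence (amenability)
    (hfolner : ∀ (S : Finset Γ) (ε : ℝ), 0 < ε →
      ∃ Efin : Finset Γ, Efin.Nonempty ∧ (((Efin * S) \ Efin).card : ℝ) < ε * Efin.card) :
    -- X admits an amenable exhaustion Kₙ := ∪_{γ ∈ Eₙ} γF
    ∃ (Es : ℕ → Finset Γ) (K : ℕ → Set V),
      (∀ n, K n = ⋃ γ ∈ (Es n : Set Γ), (fun x => γ • x) '' VF) ∧
      -- Kₙ ⊆ Kₙ₊₁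
      (∀ n, Es n ⊆ Es (n + 1)) ∧
      (∀ n, K n ⊆ K (n + 1)) ∧
      -- ∪ₙ Kₙ = X
      (⋃ n, K n) = (Set.univ : Set V) ∧
      (⋃ n, ⋃ γ ∈ (Es n : Set Γ), (fun e => γ • e) '' (EF ∪ bar '' EF)) =
        (Set.univ : Set E) ∧
      -- |𝓕Kₙ|/|VKₙ| → 0, where 𝓕Kₙ = {v ∈ VKₙ : dist(v, VX∖VKₙ) = 1}
      Filter.Tendsto
        (fun n => (Nat.card {v : V // v ∈ K n ∧ ∃ e, o e = v ∧ t e ∉ K n} : ℝ) /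
          (Nat.card (K n) : ℝ))
        Filter.atTop (nhds 0) := by
  have hVFfin : VF.Finite := hVF ▸ (hEFfin.image o).union (hEFfin.image t)
  have hcoverE : ∀ e, ∃ γ : Γ, γ • e ∈ EF ∪ bar '' EF :=
    exists_smul_mem_union_image hbar_invol hbar_smul fun e => (hEF e).exists
  have hoEF : o '' (EF ∪ bar '' EF) = VF := by
    rw [hVF, Set.image_union, Set.image_image]
    simp only [ho_bar]
  have hcover : ∀ v, ∃ γ : Γ, γ • v ∈ VF := fun v =>
    hoEF ▸ exists_smul_mem_image ho_smul hcoverE (exists_edge_of_reflTransGen hconn v)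
  have : Infinite Γ := infinite_of_forall_exists_smul_mem hVFfin hcover
  have hVFne : VF.Nonempty := (hcover (Classical.arbitrary V)).elim fun _ h => ⟨_, h⟩
  have hSfin := finite_setOf_exists_edge_smul hfree hfib hVFfin (t := t)
  obtain ⟨Es, hmono, hexhaust, hfol⟩ :=
    HasFolnerSets.exists_exhaustion hfolner hSfin.toFinset
  have hK : ∀ n, (Es n : Set Γ) • VF = ⋃ γ ∈ (Es n : Set Γ), (fun x => γ • x) '' VF :=
    fun n => Set.iUnion_smul_left_image.symm
  refine ⟨Es, fun n => (Es n : Set Γ) • VF, hK, hmono,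
    fun n => Set.smul_subset_smul_right (Finset.coe_subset.2 (hmono n)), ?_,
    iUnion_biUnion_smul_eq_univ hcoverE hexhaust, ?_⟩
  · simp_rw [hK]
    exact iUnion_biUnion_smul_eq_univ hcover hexhaust
  · refine squeeze_zero (fun n => by positivity) (fun n => ?_)
      (by simpa using tendsto_one_div_add_atTop_nhds_zero_nat.const_mul ((VF.ncard : ℝ) * d))
    refine (ncard_vertexBoundary_smul_div_le ho_smul ht_smul hbar_invol ho_bar hfree hfib hdeg
      hVFfin hVFne hcover (fun e s he hs => hSfin.mem_toFinset.2 ⟨e, he, hs⟩) (hfol n).1).trans ?_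
    gcongr
    rw [div_le_iff₀ (by exact_mod_cast (hfol n).1.card_pos)]
    simpa only [one_div] using (hfol n).2.le

/-- Theorem 7.2: if `Γ` is amenable (admits a Følner sequence) and acts freely and
cofinitely on the connected countably infinite graph `X` with bounded degree, with
finite connected fundamental domain `F`, then `X` admits an amenable exhaustion
`Kₙ = ∪_{γ∈Eₙ} γF`. -/
theorem amenable_exhaustion_exists
    {V E Γ : Type*} [Countable V] [Countable E] [Infinite V]
    [Group Γ] [Countable Γ] [DecidableEq Γ] [MulAction Γ V] [MulAction Γ E]
    -- the graph in the sense of Serre, connected, countably infinite, bounded degree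
    (o t : E → V) (bar : E → E)
    (hbar_invol : ∀ e, bar (bar e) = e)
    (hbar_ne : ∀ e, bar e ≠ e)
    (ho_bar : ∀ e, o (bar e) = t e)
    (hconn : ∀ u v : V, Relation.ReflTransGen (fun a b => ∃ e, o e = a ∧ t e = b) u v)
    (d : ℕ) (hfib : ∀ v, {e | o e = v}.Finite)
    (hdeg : ∀ v, Nat.card {e // o e = v} ≤ d)
    -- Γ acts by automorphisms of the graph
    (ho_smul : ∀ (γ : Γ) (e : E), o (γ • e) = γ • o e)
    (ht_smul : ∀ (γ : Γ) (e : E), t (γ • e) = γ • t e)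
    (hbar_smul : ∀ (γ : Γ) (e : E), bar (γ • e) = γ • bar e)
    -- without inversions
    (hnoinv : ∀ (γ : Γ) (e : E), γ • e ≠ bar e)
    -- freely
    (hfree : ∀ (γ : Γ) (v : V), γ • v = v → γ = 1)
    -- with finite connected fundamental domain F = (VF, EF): EF contains exactly one
    -- representative of each Γ-orbit of geometric edges {e, ē} (cofiniteness)
    (EF : Set E) (hEFfin : EF.Finite)
    (hEF : ∀ e : E, ∃! f, f ∈ EF ∧ ∃ γ : Γ, γ • e = f ∨ γ • bar e = f)
    (VF : Set V) (hVF : VF = o '' EF ∪ t '' EF)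
    (hFconn : ∀ u v : V, u ∈ VF → v ∈ VF →
      Relation.ReflTransGen
        (fun a b => ∃ e, (e ∈ EF ∨ bar e ∈ EF) ∧ o e = a ∧ t e = b) u v)
    -- Γ admits a Følner sequence (amenability)
    (hfolner : ∀ (S : Finset Γ) (ε : ℝ), 0 < ε →
      ∃ Efin : Finset Γ, Efin.Nonempty ∧ (((Efin * S) \ Efin).card : ℝ) < ε * Efin.card) :
    -- X admits an amenable exhaustion Kₙ := ∪_{γ ∈ Eₙ} γF
    ∃ (Es : ℕ → Finset Γ) (K : ℕ → Set V),
      (∀ n, K n = ⋃ γ ∈ (Es n : Set Γ), (fun x => γ • x) '' VF) ∧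
      -- Kₙ ⊆ Kₙ₊₁
      (∀ n, Es n ⊆ Es (n + 1)) ∧
      (∀ n, K n ⊆ K (n + 1)) ∧
      -- ∪ₙ Kₙ = X
      (⋃ n, K n) = (Set.univ : Set V) ∧
      (⋃ n, ⋃ γ ∈ (Es n : Set Γ), (fun e => γ • e) '' (EF ∪ bar '' EF)) =
        (Set.univ : Set E) ∧
      -- |𝓕Kₙ|/|VKₙ| → 0, where 𝓕Kₙ = {v ∈ VKₙ : dist(v, VX∖VKₙ) = 1}
      Filter.Tendsto
        (fun n => (Nat.card {v : V // v ∈ K n ∧ ∃ e, o e = v ∧ t e ∉ K n} : ℝ) /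
          (Nat.card (K n) : ℝ))
        Filter.atTop (nhds 0) :=
  amenable_exhaustion_exists_general o t bar hbar_invol ho_bar hconn d hfib hdeg ho_smul ht_smul
    hbar_smul hfree EF hEFfin hEF VF hVF hfolner
end
end
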